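/- arXiv:2102.08605 — 11 statements merged into one kernel-verified Lean document; each statement's English description precedes it below -/
import Mathlib

section
/- For every integer k ≥ 3 there exist a finite group G of order n and positive integers a_1, ..., a_k with each a_i > 1 and n = a_1⋯a_k such that G has no k-fold factorization of the form (a_1, ..., a_k). -/
open Pointwise

/-- A finite group `G` has a `k`-fold factorization of the form `(a 0, …, a (k-1))`:
there are subsets `A 0, …, A (k-1)` of `G` with `|A i| = a i`, `|G| = a 0 ⋯ a (k-1)`,
and the setwise product `A 0 ⋯ A (k-1)` equals `G`. -/
def HasFactorization (G : Type*) [Group G] {k : ℕ} (a : Fin k → ℕ) : Prop :=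
  ∃ A : Fin k → Set G,
    (∀ i, Nat.card (A i) = a i) ∧
    Nat.card G = ∏ i, a i ∧
    (List.ofFn A).prod = (Set.univ : Set G)

/-!
Take `q = 2 ^ (k - 1)`, the affine group `G = AGL(1, q)` of order `q (q - 1)`, and
`a = (2, q - 1, 2, …, 2)`. In `G` every element is an involution (a translation) or has odd order
dividing `q - 1`, and all involutions are conjugate.

A factorization of type `a` yields `G = {g, x g} B {h, h y}` with `4 |B| ≤ |G|`. Counting shows
that `G` is the disjoint union of `D = g B {h, h y}` and `x D`, so `x` swaps `D` with its complement
and has even order; hence `x`, and symmetrically `y`, is an involution. So `x c = c y` for some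
`c = g' b h'`, which is impossible: `x c` lies in `(x g') B {h, h y}`, the complement of
`g' B {h, h y}`, while `c y` lies in the latter.
-/

open Set

theorem Set.compl_eq_of_union_eq_univ {α : Type*} [Finite α] {s t : Set α} (h : s ∪ t = univ)
    (hcard : s.ncard + t.ncard ≤ Nat.card α) : sᶜ = t := by
  refine eq_of_subset_of_ncard_le (fun a ha => (h ▸ mem_univ a : a ∈ s ∪ t).resolve_left ha) ?_
  have := ncard_add_ncard_compl s
  omega

theorem even_orderOf_of_smul_eq_compl {M α : Type*} [Group M] [MulAction M α] [Nonempty α]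
    {x : M} {D : Set α} (hD : x • D = Dᶜ) : Even (orderOf x) := by
  have hpow (n : ℕ) : x ^ n • D = if Even n then D else Dᶜ := by
    induction n with
    | zero => simp
    | succ n ih =>
      rw [pow_succ', mul_smul, ih]
      by_cases hn : Even n <;> simp [hn, Nat.even_add_one, hD, smul_set_compl]
  by_contra hodd
  have := hpow (orderOf x)
  rw [pow_orderOf_eq_one, one_smul, if_neg hodd] at this
  exact compl_ne_self this.symm

theorem Set.ncard_mul_le {M : Type*} [Mul M] [IsCancelMul M] (s t : Set M) :
    (s * t).ncard ≤ s.ncard * t.ncard := by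
  simpa only [Nat.card_coe_set_eq] using natCard_mul_le (s := s) (t := t)

section PairFactorization

variable {G : Type*} [Group G] [Finite G] {g h x y : G} {S B : Set G}

theorem compl_smul_eq_of_pair_mul_eq_univ (hS : {g, x * g} * S = univ)
    (hcard : 2 * S.ncard ≤ Nat.card G) : (g • S)ᶜ = (x * g) • S :=
  compl_eq_of_union_eq_univ (pair_mul g (x * g) S ▸ hS)
    (by rwa [ncard_smul_set, ncard_smul_set, ← two_mul])

theorem even_orderOf_of_pair_mul_eq_univ (hS : {g, x * g} * S = univ)
    (hcard : 2 * S.ncard ≤ Nat.card G) : Even (orderOf x) :=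
  even_orderOf_of_smul_eq_compl (D := g • S) (by
    rw [smul_smul, compl_smul_eq_of_pair_mul_eq_univ hS hcard])

theorem even_orderOf_of_mul_pair_eq_univ (hS : S * {h, h * y} = univ)
    (hcard : 2 * S.ncard ≤ Nat.card G) : Even (orderOf y) := by
  rw [← orderOf_inv]
  refine even_orderOf_of_pair_mul_eq_univ (g := h⁻¹) (S := S⁻¹) ?_ (by rwa [ncard_inv])
  simpa [mul_inv_rev, inv_insert] using congrArg (·⁻¹) hS

theorem not_isConj_of_pair_mul_mul_pair_eq_univ (hcov : {g, x * g} * B * {h, h * y} = univ)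
    (hB : 2 * B.ncard * 2 ≤ Nat.card G) (hx : x * x = 1) (hy : y * y = 1) : ¬ IsConj y x := by
  have hT : 2 * (B * {h, h * y}).ncard ≤ Nat.card G := by
    have : ({h, h * y} : Set G).ncard ≤ 2 := (ncard_insert_le _ _).trans (by simp)
    have := (Set.ncard_mul_le B {h, h * y}).trans (Nat.mul_le_mul_left _ this)
    omega
  set T := B * {h, h * y}
  have hsep : ∀ g' ∈ ({g, x * g} : Set G), (g' • T)ᶜ = (x * g') • T := by
    rw [mul_assoc] at hcov
    rintro g' (rfl | rfl)
    · exact compl_smul_eq_of_pair_mul_eq_univ hcov hT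
    · rw [← mul_assoc, hx, one_mul, ← compl_smul_eq_of_pair_mul_eq_univ hcov hT, compl_compl]
  rintro ⟨c, hc⟩
  have hc' : (c : G) ∈ {g, x * g} * B * {h, h * y} := hcov ▸ mem_univ _
  obtain ⟨_, ⟨g', hg', b, hb, rfl⟩, h', hh', hc_eq⟩ := hc'
  rw [SemiconjBy, ← hc_eq] at hc
  have hh'y : h' * y ∈ ({h, h * y} : Set G) := by
    rcases hh' with rfl | rfl
    · exact .inr rfl
    · exact .inl (by rw [mul_assoc, hy, mul_one])
  have hleft : g' * b * h' * y ∈ g' • T := by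
    simpa only [smul_eq_mul, mul_assoc] using smul_mem_smul_set (a := g') (mul_mem_mul hb hh'y)
  have hright : x * (g' * b * h') ∈ (x * g') • T := by
    simpa only [smul_eq_mul, mul_assoc] using smul_mem_smul_set (a := x * g') (mul_mem_mul hb hh')
  rw [← hsep g' hg', ← hc] at hright
  exact hright hleft

theorem pair_mul_mul_pair_ne_univ (hodd : ∀ g : G, g * g = 1 ∨ Odd (orderOf g))
    (hconj : ∀ g h : G, g * g = 1 → h * h = 1 → g ≠ 1 → h ≠ 1 → IsConj g h)
    {X Y : Set G} (hX : X.ncard = 2) (hY : Y.ncard = 2) (hB : 2 * B.ncard * 2 ≤ Nat.card G) :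
    X * B * Y ≠ univ := by
  obtain ⟨g, g', hgg', rfl⟩ := ncard_eq_two.mp hX
  obtain ⟨x, rfl⟩ : ∃ x, g' = x * g := ⟨g' * g⁻¹, by group⟩
  obtain ⟨h, h', hhh', rfl⟩ := ncard_eq_two.mp hY
  obtain ⟨y, rfl⟩ : ∃ y, h' = h * y := ⟨h⁻¹ * h', by group⟩
  have hx1 : x ≠ 1 := by rintro rfl; simp at hgg'
  have hy1 : y ≠ 1 := by rintro rfl; simp at hhh'
  intro hcov
  have hx2 : x * x = 1 := by
    refine (hodd x).resolve_right (Nat.not_odd_iff_even.mpr ?_)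
    refine even_orderOf_of_pair_mul_eq_univ (S := B * {h, h * y}) (by rwa [← mul_assoc]) ?_
    have := Set.ncard_mul_le B {h, h * y}
    rw [hY] at this
    omega
  have hy2 : y * y = 1 := by
    refine (hodd y).resolve_right (Nat.not_odd_iff_even.mpr ?_)
    refine even_orderOf_of_mul_pair_eq_univ (S := {g, x * g} * B) hcov ?_
    have := Set.ncard_mul_le {g, x * g} B
    rw [hX] at this
    omega
  exact not_isConj_of_pair_mul_mul_pair_eq_univ hcov hB hx2 hy2 (hconj y x hy2 hx2 hy1 hx1)

end PairFactorization

theorem HasFactorization.exists_mul_mul_eq_univ {G : Type*} [Group G] {n : ℕ}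
    {a : Fin (n + 2) → ℕ} (hG : HasFactorization G a) :
    ∃ X B Y : Set G, X.ncard = a 0 ∧ Y.ncard = a (Fin.last _) ∧
      a 0 * B.ncard * a (Fin.last _) ≤ Nat.card G ∧ X * B * Y = univ := by
  obtain ⟨A, hA, hcard, hprod⟩ := hG
  simp only [Nat.card_coe_set_eq] at hA
  refine ⟨A 0, (List.ofFn fun i : Fin n => A i.castSucc.succ).prod, A (Fin.last _), hA 0, hA _,
    ?_, ?_⟩
  · have hB : (List.ofFn fun i : Fin n => A i.castSucc.succ).prod.ncard ≤
        ∏ i : Fin n, a i.castSucc.succ := by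
      refine (List.le_prod_of_submultiplicative (α := Set G) ncard
        (by rw [← singleton_one, ncard_singleton]) Set.ncard_mul_le _).trans ?_
      rw [List.map_ofFn, List.prod_ofFn]
      simp only [Function.comp_def, hA, le_refl]
    rw [hcard, Fin.prod_univ_succ, Fin.prod_univ_castSucc, Fin.succ_last, ← mul_assoc]
    gcongr
  · rw [← hprod, List.ofFn_succ, List.ofFn_succ', List.prod_cons, List.prod_concat, Fin.succ_last,
      mul_assoc]

/-- The affine group of the line `F`: `⟨b, a⟩` is the map `t ↦ a * t + b`, and multiplication is
composition. -/
@[ext]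
structure Aff (F : Type*) [Field F] where
  shift : F
  scale : Fˣ

namespace Aff

variable {F : Type*} [Field F]

instance : Mul (Aff F) := ⟨fun g h => ⟨g.shift + g.scale * h.shift, g.scale * h.scale⟩⟩
instance : One (Aff F) := ⟨⟨0, 1⟩⟩
instance : Inv (Aff F) := ⟨fun g => ⟨-(g.scale⁻¹ * g.shift : F), g.scale⁻¹⟩⟩

@[simp] theorem mul_shift (g h : Aff F) : (g * h).shift = g.shift + g.scale * h.shift := rfl
@[simp] theorem mul_scale (g h : Aff F) : (g * h).scale = g.scale * h.scale := rfl
@[simp] theorem one_shift : (1 : Aff F).shift = 0 := rfl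
@[simp] theorem one_scale : (1 : Aff F).scale = 1 := rfl
@[simp] theorem inv_shift (g : Aff F) : g⁻¹.shift = -(g.scale⁻¹ * g.shift : F) := rfl
@[simp] theorem inv_scale (g : Aff F) : g⁻¹.scale = g.scale⁻¹ := rfl

instance : Group (Aff F) where
  mul_assoc _ _ _ := by ext <;> simp [mul_add, add_assoc, mul_assoc]
  one_mul _ := by ext <;> simp
  mul_one _ := by ext <;> simp
  inv_mul_cancel _ := by ext <;> simp

def scaleHom : Aff F →* Fˣ where
  toFun := scale
  map_one' := rfl
  map_mul' _ _ := rfl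

def equivProd : Aff F ≃ F × Fˣ where
  toFun g := (g.shift, g.scale)
  invFun p := ⟨p.1, p.2⟩

instance [Finite F] : Finite (Aff F) := .of_equiv _ equivProd.symm

theorem natCard_eq [Finite F] : Nat.card (Aff F) = Nat.card F * (Nat.card F - 1) := by
  rw [Nat.card_congr equivProd, Nat.card_prod, Nat.card_units]

/-- `g ^ orderOf g.scale` is a translation commuting with `g`, and a translation commutes with
`g` only if it is trivial. -/
theorem pow_orderOf_scale_eq_one {g : Aff F} (hg : g.scale ≠ 1) : g ^ orderOf g.scale = 1 := by
  set t := g ^ orderOf g.scale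
  have hcomm : g * t = t * g := (Commute.self_pow g _).eq
  have ht : t.scale = 1 := (map_pow scaleHom g _).trans (pow_orderOf_eq_one g.scale)
  have hcomm := congrArg shift hcomm
  simp only [mul_shift, ht, Units.val_one, one_mul] at hcomm
  have : ((g.scale : F) - 1) * t.shift = 0 := by linear_combination hcomm
  have hshift : t.shift = 0 :=
    (mul_eq_zero.mp this).resolve_left (sub_ne_zero.mpr (Units.val_eq_one.not.mpr hg))
  ext <;> simp [ht, hshift]

variable [CharP F 2]

theorem odd_natCard_units [Finite F] : Odd (Nat.card Fˣ) := by
  have := Fintype.ofFinite F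
  have heven : 2 ∣ Nat.card F := by
    rw [Nat.card_eq_fintype_card, ← CharP.cast_eq_zero_iff F 2]
    exact Nat.cast_card_eq_zero F
  rw [Nat.card_units]
  exact Nat.Even.sub_odd Nat.card_pos (even_iff_two_dvd.mpr heven) odd_one

theorem mul_self_eq_one_or_odd_orderOf [Finite F] (g : Aff F) :
    g * g = 1 ∨ Odd (orderOf g) := by
  by_cases hg : g.scale = 1
  · left
    ext <;> simp [hg, CharTwo.add_self_eq_zero]
  · exact .inr <| odd_natCard_units.of_dvd_nat <|
      (orderOf_dvd_of_pow_eq_one (pow_orderOf_scale_eq_one hg)).trans (orderOf_dvd_natCard _)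

theorem scale_eq_one_of_mul_self_eq_one {g : Aff F} (hg : g * g = 1) : g.scale = 1 := by
  have : (g.scale : F) ^ 2 = 1 ^ 2 := by
    simpa [sq] using congrArg (fun g : Aff F => (g.scale : F)) hg
  exact Units.val_eq_one.mp (CharTwo.sq_inj.mp this)

theorem isConj_of_mul_self_eq_one {g h : Aff F} (hg : g * g = 1) (hh : h * h = 1) (hg1 : g ≠ 1)
    (hh1 : h ≠ 1) : IsConj g h := by
  have hgs := scale_eq_one_of_mul_self_eq_one hg
  have hhs := scale_eq_one_of_mul_self_eq_one hh
  have hgv : g.shift ≠ 0 := fun h0 => hg1 (Aff.ext h0 hgs)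
  have hhv : h.shift ≠ 0 := fun h0 => hh1 (Aff.ext h0 hhs)
  refine isConj_iff.mpr ⟨⟨0, Units.mk0 (h.shift / g.shift) (div_ne_zero hhv hgv)⟩, ?_⟩
  ext <;> simp [hgs, hhs, hgv]

end Aff

/-- For every integer `k ≥ 3` there exist a finite group `G` of order `n` and a
factorization `n = a 1 ⋯ a k` with all `a i > 1` such that `G` has no `k`-fold
factorization of the form `(a 1, …, a k)`. -/
theorem exists_group_without_k_factorization (k : ℕ) (hk : 3 ≤ k) :
    ∃ (G : Type) (inst : Group G) (_ : Finite G) (a : Fin k → ℕ),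
      (∀ i, 1 < a i) ∧ Nat.card G = ∏ i, a i ∧ ¬ @HasFactorization G inst k a := by
  obtain ⟨n, rfl⟩ : ∃ n, k = n + 3 := ⟨k - 3, by omega⟩
  set q := 2 ^ (n + 2)
  have hq : 4 ≤ q := Nat.pow_le_pow_right (n := 2) two_pos (i := 2) (by omega)
  let a : Fin (n + 3) → ℕ := Fin.cons 2 (Fin.cons (q - 1) fun _ => 2)
  refine ⟨Aff (GaloisField 2 (n + 2)), inferInstance, inferInstance, a, ?_, ?_, ?_⟩
  · exact Fin.cases (by simp [a]) (Fin.cases (by simp [a]; omega) (by simp [a]))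
  · rw [Aff.natCard_eq, GaloisField.card 2 (n + 2) (by omega), Fin.prod_univ_succ,
      Fin.prod_univ_succ]
    simp only [a, Fin.cons_zero, Fin.cons_succ, Finset.prod_const, Finset.card_univ,
      Fintype.card_fin, q]
    ring
  · intro hfac
    obtain ⟨X, B, Y, hX, hY, hB, hcov⟩ := hfac.exists_mul_mul_eq_univ
    exact pair_mul_mul_pair_ne_univ Aff.mul_self_eq_one_or_odd_orderOf
      (fun _ _ => Aff.isConj_of_mul_self_eq_one) hX hY hB hcov
end

section
/- If G = A·B is a 2-fold factorization of a finite group G (that is, A and B are subsets with |G| = |A|·|B| and G = AB) and H is a subgroup of G with A ⊆ H, then |A| divides |H|. -/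
open Pointwise

/-- If `G = A·B` is a `2`-fold factorization of a finite group `G` (that is, `A` and
`B` are subsets with `|G| = |A|·|B|` and `G = AB`) and `H` is a subgroup of `G` with
`A ⊆ H`, then `|A|` divides `|H|`. -/
theorem card_dvd_of_subset_subgroup (G : Type*) [Group G] [Finite G]
    (A B : Set G) (hcard : Nat.card G = Nat.card A * Nat.card B)
    (hprod : A * B = Set.univ)
    (H : Subgroup G) (hA : A ⊆ (H : Set G)) :
    Nat.card A ∣ Nat.card H := by
  -- the multiplication map A × B → G
  set f : A × B → G := fun p => (p.1 : G) * (p.2 : G) with hf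
  have hsurj : Function.Surjective f := by
    intro g
    have : g ∈ A * B := by rw [hprod]; trivial
    obtain ⟨a, ha, b, hb, hab⟩ := this
    exact ⟨(⟨a, ha⟩, ⟨b, hb⟩), hab⟩
  have hcard' : Nat.card (A × B) = Nat.card G := by
    rw [Nat.card_prod, hcard]
  have hinj : Function.Injective f :=
    (Nat.bijective_iff_surjective_and_card f).2 ⟨hsurj, hcard'⟩ |>.1
  -- map A × (B ∩ H) → H
  set C : Set G := B ∩ (H : Set G) with hC
  have key : Function.Bijective (fun p : A × C => (⟨(p.1 : G) * (p.2 : G),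
      H.mul_mem (hA p.1.2) p.2.2.2⟩ : H)) := by
    constructor
    · intro p q hpq
      have : f (p.1, ⟨p.2.1, p.2.2.1⟩) = f (q.1, ⟨q.2.1, q.2.2.1⟩) := by
        simpa [hf] using congrArg Subtype.val hpq
      have := hinj this
      obtain ⟨h1, h2⟩ := Prod.mk.inj this
      have h2' : (p.2 : G) = (q.2 : G) := Subtype.mk.inj h2
      exact Prod.ext h1 (Subtype.ext h2')
    · intro ⟨h, hh⟩
      obtain ⟨⟨a, b⟩, hab⟩ := hsurj h
      have hbH : (b : G) ∈ (H : Set G) := by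
        have : (b : G) = (a : G)⁻¹ * h := by
          rw [← hab]; simp [hf]
        rw [this]
        exact H.mul_mem (H.inv_mem (hA a.2)) hh
      exact ⟨(a, ⟨b, b.2, hbH⟩), Subtype.ext hab⟩
  have : Nat.card H = Nat.card A * Nat.card C := by
    rw [← Nat.card_prod]
    exact (Nat.card_eq_of_bijective _ key).symm
  exact ⟨Nat.card C, this⟩
end

section
/- There exists a 3-fold factorization of the alternating group A_4 of the form A_4 = A·B·C (subsets with |A_4| = |A|·|B|·|C| and A_4 = ABC) such that |B| = 2 and the subgroup of A_4 generated by B has order 3. -/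
open Pointwise

namespace A4fact

abbrev G := alternatingGroup (Fin 4)

def g : G := ⟨Equiv.swap 0 1 * Equiv.swap 1 2, Equiv.Perm.mem_alternatingGroup.mpr (by decide)⟩
def t : G := ⟨Equiv.swap 0 1 * Equiv.swap 2 3, Equiv.Perm.mem_alternatingGroup.mpr (by decide)⟩
def h : G := ⟨Equiv.swap 0 1 * Equiv.swap 1 3, Equiv.Perm.mem_alternatingGroup.mpr (by decide)⟩

def FA : Finset G := {1, t}
def FB : Finset G := {1, g}
def FC : Finset G := {1, h, h*h}

end A4fact

open A4fact

/-- There exists a `3`-fold factorization of the alternating group `A₄` of the form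
`A₄ = A·B·C` (subsets with `|A₄| = |A|·|B|·|C|` and `A₄ = ABC`) such that `|B| = 2`
and the subgroup of `A₄` generated by `B` has order `3`. -/
theorem A4_factorization_with_nondividing_middle :
    ∃ A B C : Set (alternatingGroup (Fin 4)),
      Nat.card (alternatingGroup (Fin 4)) = Nat.card A * Nat.card B * Nat.card C ∧
      A * B * C = Set.univ ∧
      Nat.card B = 2 ∧
      Nat.card (Subgroup.closure B) = 3 := by
  refine ⟨(FA : Set G), (FB : Set G), (FC : Set G), ?_, ?_, ?_, ?_⟩
  · rw [Nat.card_eq_fintype_card, Nat.card_coe_set_eq, Nat.card_coe_set_eq,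
      Nat.card_coe_set_eq, Set.ncard_coe_finset, Set.ncard_coe_finset,
      Set.ncard_coe_finset]
    decide
  · rw [← Finset.coe_mul, ← Finset.coe_mul, ← Finset.coe_univ]
    exact congrArg _ (by decide)
  · rw [Nat.card_coe_set_eq, Set.ncard_coe_finset]; decide
  · have hB : Subgroup.closure (FB : Set G) = Subgroup.zpowers g := by
      apply le_antisymm
      · rw [Subgroup.closure_le]
        intro x hx
        simp only [FB, Finset.coe_insert, Finset.coe_singleton, Set.mem_insert_iff,
          Set.mem_singleton_iff] at hx
        rcases hx with rfl | rfl
        · exact Subgroup.one_mem _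
        · exact Subgroup.mem_zpowers g
      · rw [Subgroup.zpowers_le]
        exact Subgroup.subset_closure (by simp [FB])
    rw [hB, Nat.card_zpowers]
    exact orderOf_eq_prime (by decide) (by decide)
end

section
/- Let G be a finite group such that (i) all involutions of G are conjugate and (ii) each nonidentity element of G has either order 2 or odd order. Then G has no 3-fold factorization of the form (2, |G|/4, 2). -/
open Pointwise

lemma core_no_fact (G : Type*) [Group G] [Finite G]
    (h1 : ∀ x y : G, orderOf x = 2 → orderOf y = 2 → IsConj x y)
    (h2 : ∀ x : G, x ≠ 1 → orderOf x = 2 ∨ Odd (orderOf x))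
    (m : ℕ) (hm : 0 < m) (hG : Nat.card G = 4 * m)
    (B : Set G) (hB : Nat.card B = m)
    (x y : G) (hx : x ≠ 1) (hy : y ≠ 1)
    (hcover : ∀ g : G, ∃ b ∈ B, g = b ∨ g = x * b ∨ g = b * y ∨ g = x * b * y) :
    False := by
  classical
  -- the product map is bijective
  set f : Bool × B × Bool → G :=
    fun p => (if p.1 then x else 1) * (p.2.1 : G) * (if p.2.2 then y else 1) with hf
  have hsurj : Function.Surjective f := by
    intro g
    obtain ⟨b, hb, hc⟩ := hcover g
    rcases hc with h | h | h | h
    · exact ⟨(false, ⟨b, hb⟩, false), by simp [hf, h]⟩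
    · exact ⟨(true, ⟨b, hb⟩, false), by simp [hf, h]⟩
    · exact ⟨(false, ⟨b, hb⟩, true), by simp [hf, h]⟩
    · exact ⟨(true, ⟨b, hb⟩, true), by simp [hf, h]⟩
  have hcard : Nat.card (Bool × B × Bool) = Nat.card G := by
    simp [Nat.card_prod, hB, hG]; ring
  have hinj : Function.Injective f :=
    ((Nat.bijective_iff_surjective_and_card f).mpr ⟨hsurj, hcard⟩).1
  have inject : ∀ (u1 u2 v1 v2 : Bool) (b1 b2 : G), b1 ∈ B → b2 ∈ B →
      (if u1 then x else 1) * b1 * (if v1 then y else 1) =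
        (if u2 then x else 1) * b2 * (if v2 then y else 1) →
      u1 = u2 ∧ b1 = b2 ∧ v1 = v2 := by
    intro u1 u2 v1 v2 b1 b2 hb1 hb2 h
    have := hinj (a₁ := (u1, ⟨b1, hb1⟩, v1)) (a₂ := (u2, ⟨b2, hb2⟩, v2)) h
    rw [Prod.ext_iff, Prod.ext_iff, Subtype.ext_iff] at this
    exact ⟨this.1, this.2.1, this.2.2⟩
  -- five non-equality consequences
  have n1 : ∀ b1 b2 : G, b1 ∈ B → b2 ∈ B → b1 ≠ x * b2 := by
    intro b1 b2 hb1 hb2 h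
    simpa using (inject false true false false b1 b2 hb1 hb2 (by simpa using h)).1
  have n2 : ∀ b1 b2 : G, b1 ∈ B → b2 ∈ B → b1 ≠ x * b2 * y := by
    intro b1 b2 hb1 hb2 h
    simpa using (inject false true false true b1 b2 hb1 hb2 (by simpa using h)).1
  have n3 : ∀ b1 b2 : G, b1 ∈ B → b2 ∈ B → b1 * y ≠ x * b2 := by
    intro b1 b2 hb1 hb2 h
    simpa using (inject false true true false b1 b2 hb1 hb2 (by simpa using h)).1
  have n4 : ∀ b1 b2 : G, b1 ∈ B → b2 ∈ B → b1 * y ≠ x * b2 * y := by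
    intro b1 b2 hb1 hb2 h
    simpa using (inject false true true true b1 b2 hb1 hb2 (by simpa using h)).1
  have n5 : ∀ b1 b2 : G, b1 ∈ B → b2 ∈ B → b1 ≠ b2 * y := by
    intro b1 b2 hb1 hb2 h
    simpa using (inject false false false true b1 b2 hb1 hb2 (by simpa using h)).2.2
  obtain ⟨b0, hb0⟩ : ∃ b, b ∈ B := by
    have : Nonempty B := (Nat.card_pos_iff.mp (hB ▸ hm)).1
    obtain ⟨⟨b, hb⟩⟩ := this; exact ⟨b, hb⟩
  -- x has order 2
  have hxord : orderOf x = 2 := by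
    rcases h2 x hx with h | hodd
    · exact h
    exfalso
    have stepx : ∀ g : G, (∃ b ∈ B, g = b ∨ g = b * y) →
        ∃ g', (∃ b ∈ B, g' = b ∨ g' = b * y) ∧ g = (x * x) * g' := by
      intro g hg
      obtain ⟨b, hb, hgb⟩ := hg
      obtain ⟨b', hb', hc⟩ := hcover (x⁻¹ * g)
      rcases hc with h | h | h | h
      · exfalso
        have hg' : g = x * b' := by rw [← h]; group
        rcases hgb with hgb | hgb <;> rw [hgb] at hg'
        · exact n1 b b' hb hb' hg'
        · exact n3 b b' hb hb' hg'
      · refine ⟨b', ⟨b', hb', Or.inl rfl⟩, ?_⟩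
        have hg' : g = x * (x * b') := by rw [← h]; group
        rw [hg', mul_assoc]
      · exfalso
        have hg' : g = x * (b' * y) := by rw [← h]; group
        rw [← mul_assoc] at hg'
        rcases hgb with hgb | hgb <;> rw [hgb] at hg'
        · exact n2 b b' hb hb' hg'
        · exact n4 b b' hb hb' hg'
      · refine ⟨b' * y, ⟨b', hb', Or.inr rfl⟩, ?_⟩
        have hg' : g = x * (x * b' * y) := by rw [← h]; group
        rw [hg']; group
    have claim : ∀ k : ℕ, ∀ g : G, (∃ b ∈ B, g = b ∨ g = b * y) →
        ∃ g', (∃ b ∈ B, g' = b ∨ g' = b * y) ∧ g = (x * x) ^ k * g' := by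
      intro k
      induction k with
      | zero => intro g hg; exact ⟨g, hg, by simp⟩
      | succ k ih =>
        intro g hg
        obtain ⟨g1, hg1, hgeq⟩ := stepx g hg
        obtain ⟨g2, hg2, hgeq2⟩ := ih g1 hg1
        refine ⟨g2, hg2, ?_⟩
        rw [hgeq, hgeq2, ← mul_assoc, ← pow_succ']
    obtain ⟨k, hk⟩ := hodd
    obtain ⟨g', hg', heq⟩ := claim (k + 1) b0 ⟨b0, hb0, Or.inl rfl⟩
    have hpow : (x * x) ^ (k + 1) = x := by
      rw [← pow_two, ← pow_mul, show 2 * (k + 1) = (2 * k + 1) + 1 from by ring,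
        pow_succ, ← hk, pow_orderOf_eq_one, one_mul]
    rw [hpow] at heq
    obtain ⟨b, hb, hg'b⟩ := hg'
    rcases hg'b with hgb | hgb <;> rw [hgb] at heq
    · exact n1 b0 b hb0 hb heq
    · rw [← mul_assoc] at heq
      exact n2 b0 b hb0 hb heq
  -- y has order 2
  have hyord : orderOf y = 2 := by
    rcases h2 y hy with h | hodd
    · exact h
    exfalso
    have stepy : ∀ g : G, (∃ b ∈ B, g = b ∨ g = x * b) →
        ∃ g', (∃ b ∈ B, g' = b ∨ g' = x * b) ∧ g = g' * (y * y) := by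
      intro g hg
      obtain ⟨b, hb, hgb⟩ := hg
      obtain ⟨b', hb', hc⟩ := hcover (g * y⁻¹)
      rcases hc with h | h | h | h
      · exfalso
        have hg' : g = b' * y := by rw [← h]; group
        rcases hgb with hgb | hgb <;> rw [hgb] at hg'
        · exact n5 b b' hb hb' hg'
        · exact n3 b' b hb' hb hg'.symm
      · exfalso
        have hg' : g = x * b' * y := by rw [← h]; group
        rcases hgb with hgb | hgb <;> rw [hgb] at hg'
        · exact n2 b b' hb hb' hg'
        · rw [mul_assoc] at hg'
          exact n5 b b' hb hb' (mul_left_cancel hg')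
      · refine ⟨b', ⟨b', hb', Or.inl rfl⟩, ?_⟩
        have hg' : g = b' * y * y := by rw [← h]; group
        rw [hg']; group
      · refine ⟨x * b', ⟨b', hb', Or.inr rfl⟩, ?_⟩
        have hg' : g = x * b' * y * y := by rw [← h]; group
        rw [hg']; group
    have claim : ∀ k : ℕ, ∀ g : G, (∃ b ∈ B, g = b ∨ g = x * b) →
        ∃ g', (∃ b ∈ B, g' = b ∨ g' = x * b) ∧ g = g' * (y * y) ^ k := by
      intro k
      induction k with
      | zero => intro g hg; exact ⟨g, hg, by simp⟩
      | succ k ih =>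
        intro g hg
        obtain ⟨g1, hg1, hgeq⟩ := stepy g hg
        obtain ⟨g2, hg2, hgeq2⟩ := ih g1 hg1
        refine ⟨g2, hg2, ?_⟩
        rw [hgeq, hgeq2, mul_assoc, ← pow_succ]
    obtain ⟨k, hk⟩ := hodd
    obtain ⟨g', hg', heq⟩ := claim (k + 1) b0 ⟨b0, hb0, Or.inl rfl⟩
    have hpow : (y * y) ^ (k + 1) = y := by
      rw [← pow_two, ← pow_mul, show 2 * (k + 1) = (2 * k + 1) + 1 from by ring,
        pow_succ, ← hk, pow_orderOf_eq_one, one_mul]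
    rw [hpow] at heq
    obtain ⟨b, hb, hg'b⟩ := hg'
    rcases hg'b with hgb | hgb <;> rw [hgb] at heq
    · exact n5 b0 b hb0 hb heq
    · exact n2 b0 b hb0 hb heq
  -- squares are 1
  have hx2 : x * x = 1 := by
    have := pow_orderOf_eq_one x; rwa [hxord, pow_two] at this
  have hy2 : y * y = 1 := by
    have := pow_orderOf_eq_one y; rwa [hyord, pow_two] at this
  have hx2' : ∀ g : G, x * (x * g) = g := by
    intro g; rw [← mul_assoc, hx2, one_mul]
  have hy2' : ∀ g : G, g * y * y = g := by
    intro g; rw [mul_assoc, hy2, mul_one]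
  -- a fixed point of g ↦ x * g * y
  obtain ⟨c, hcc⟩ := isConj_iff.mp (h1 x y hxord hyord)
  have hfix : x * c⁻¹ * y = c⁻¹ := by
    have hxeq : x = c⁻¹ * y * c := by rw [← hcc]; group
    rw [hxeq]
    calc c⁻¹ * y * c * c⁻¹ * y = c⁻¹ * (y * y) := by group
      _ = c⁻¹ := by rw [hy2, mul_one]
  obtain ⟨b, hb, h⟩ := hcover c⁻¹
  rcases h with h | h | h | h
  · have e1 : x * b * y = b := by rw [← h]; exact hfix
    exact n2 b b hb hb e1.symm
  · have e1 : x * (x * b) * y = x * b := by rw [← h]; exact hfix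
    rw [hx2'] at e1
    exact n3 b b hb hb e1
  · have e1 : x * (b * y) * y = b * y := by rw [← h]; exact hfix
    rw [← mul_assoc x b y, hy2'] at e1
    exact n3 b b hb hb e1.symm
  · have e1 : x * (x * b * y) * y = x * b * y := by rw [← h]; exact hfix
    rw [← mul_assoc x (x * b) y, hx2', hy2'] at e1
    exact n2 b b hb hb e1

/-- Let `G` be a finite group such that (i) all involutions of `G` are conjugate and
(ii) each nonidentity element of `G` has either order `2` or odd order. Then `G` has
no `3`-fold factorization of the form `(2, |G|/4, 2)`. -/

theorem no_2m2_factorization (G : Type*) [Group G] [Finite G]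
    (h1 : ∀ x y : G, orderOf x = 2 → orderOf y = 2 → IsConj x y)
    (h2 : ∀ x : G, x ≠ 1 → orderOf x = 2 ∨ Odd (orderOf x)) :
    ¬ HasFactorization G ![2, Nat.card G / 4, 2] := by
  rintro ⟨A, hA, hcardG, hprod⟩
  set m := Nat.card G / 4 with hm_def
  have hA0 : Nat.card (A 0) = 2 := by simpa using hA 0
  have hA1 : Nat.card (A 1) = m := by simpa using hA 1
  have hA2 : Nat.card (A 2) = 2 := by simpa using hA 2
  have hG4 : Nat.card G = 4 * m := by
    have : Nat.card G = 2 * m * 2 := by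
      simpa [Fin.prod_univ_three] using hcardG
    omega
  have hm : 0 < m := by
    have : 0 < Nat.card G := Nat.card_pos
    omega
  have hprod' : A 0 * A 1 * A 2 = (Set.univ : Set G) := by
    simpa [List.ofFn_succ, mul_assoc] using hprod
  obtain ⟨a1, a2, ha12, hA0eq⟩ : ∃ a b, a ≠ b ∧ A 0 = {a, b} := by
    rw [Nat.card_coe_set_eq] at hA0; exact Set.ncard_eq_two.mp hA0
  obtain ⟨c1, c2, hc12, hA2eq⟩ : ∃ a b, a ≠ b ∧ A 2 = {a, b} := by
    rw [Nat.card_coe_set_eq] at hA2; exact Set.ncard_eq_two.mp hA2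
  set x := a2 * a1⁻¹ with hx_def
  set y := c1⁻¹ * c2 with hy_def
  set B : Set G := (fun b => a1 * b * c1) '' (A 1) with hB_def
  have hxa : x * a1 = a2 := by rw [hx_def]; group
  have hcy : c1 * y = c2 := by rw [hy_def]; group
  have hx : x ≠ 1 := by
    intro h
    apply ha12
    rw [← hxa, h, one_mul]
  have hy : y ≠ 1 := by
    intro h
    apply hc12
    rw [← hcy, h, mul_one]
  have hB : Nat.card B = m := by
    rw [hB_def, ← hA1]
    apply Nat.card_image_of_injective
    intro u v h
    simpa using h
  have hcover : ∀ g : G, ∃ b ∈ B, g = b ∨ g = x * b ∨ g = b * y ∨ g = x * b * y := by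
    intro g
    have hg : g ∈ A 0 * A 1 * A 2 := hprod' ▸ Set.mem_univ g
    obtain ⟨pq, hpq, r, hr, hpqr⟩ := Set.mem_mul.mp hg
    obtain ⟨p, hp, q, hq, hpq'⟩ := Set.mem_mul.mp hpq
    refine ⟨a1 * q * c1, ⟨q, hq, rfl⟩, ?_⟩
    rw [hA0eq] at hp
    rw [hA2eq] at hr
    rcases hp with rfl | rfl <;> rcases hr with rfl | rfl
    · left; rw [← hpqr, ← hpq']
    · right; right; left; rw [← hpqr, ← hpq', ← hcy]; group
    · right; left; rw [← hpqr, ← hpq', ← hxa]; group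
    · right; right; right; rw [← hpqr, ← hpq', ← hxa, ← hcy]; group
  exact core_no_fact G h1 h2 m hm hG4 B hB x y hx hy hcover
end

section
/- Let G be a finite group of order n such that all involutions of G are conjugate and each nonidentity element of G has either order 2 or odd order. Then for any integer k with 3 ≤ k ≤ Ω(n) (where Ω(n) is the number of prime factors of n counted with multiplicity) and any positive integers a_1, ..., a_k with n = a_1⋯a_k and a_1 = a_k = 2, the group G has no k-fold factorization of the form (a_1, ..., a_k). -/
open Pointwise

private theorem card_setListProd_le {G : Type*} [Group G] [Finite G] :
    ∀ l : List (Set G), Nat.card l.prod ≤ (l.map fun s : Set G => Nat.card ↥s).prod := by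
  intro l
  induction l with
  | nil =>
      simp only [List.prod_nil, List.map_nil]
      have h : (1 : Set G) = {(1 : G)} := rfl
      rw [h, Nat.card_coe_set_eq, Set.ncard_singleton]
  | cons s t ih =>
      simp only [List.prod_cons, List.map_cons]
      calc Nat.card ↥(s * t.prod) ≤ Nat.card ↥s * Nat.card ↥t.prod :=
            Set.natCard_mul_le
        _ ≤ Nat.card ↥s * (t.map fun s : Set G => Nat.card ↥s).prod :=
            Nat.mul_le_mul_left _ ih

private theorem key_triple {G : Type*} [Group G] [Finite G]
    (h1 : ∀ x y : G, orderOf x = 2 → orderOf y = 2 → IsConj x y)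
    (h2 : ∀ x : G, x ≠ 1 → orderOf x = 2 ∨ Odd (orderOf x))
    (B : Set G) (a c : G) (ha : a ≠ 1) (hc : c ≠ 1)
    (hsize : 4 * Nat.card B ≤ Nat.card G)
    (hsurj : ∀ g : G, ∃ x ∈ ({1, a} : Set G), ∃ b ∈ B, ∃ y ∈ ({1, c} : Set G),
      x * b * y = g) : False := by
  classical
  set X : Set G := {1, a} with hX
  set Y : Set G := {1, c} with hY
  let f : X × B × Y → G := fun p => (p.1 : G) * (p.2.1 : G) * (p.2.2 : G)
  have fsurj : Function.Surjective f := by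
    intro g
    obtain ⟨x, hx, b, hb, y, hy, hxy⟩ := hsurj g
    exact ⟨⟨⟨x, hx⟩, ⟨b, hb⟩, ⟨y, hy⟩⟩, hxy⟩
  have hcardX : Nat.card X = 2 := by
    rw [hX, Nat.card_coe_set_eq, Set.ncard_pair (Ne.symm ha)]
  have hcardY : Nat.card Y = 2 := by
    rw [hY, Nat.card_coe_set_eq, Set.ncard_pair (Ne.symm hc)]
  have hdom : Nat.card (X × B × Y) = 4 * Nat.card B := by
    rw [Nat.card_prod, Nat.card_prod, hcardX, hcardY]; ring
  have hle : Nat.card G ≤ Nat.card (X × B × Y) :=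
    Nat.card_le_card_of_surjective f fsurj
  have hbij : Function.Bijective f := fsurj.bijective_of_nat_card_le (by omega)
  have uniq : ∀ x b y x' b' y' : G, x ∈ X → b ∈ B → y ∈ Y →
      x' ∈ X → b' ∈ B → y' ∈ Y → x * b * y = x' * b' * y' →
      x = x' ∧ b = b' ∧ y = y' := by
    intro x b y x' b' y' hx hb hy hx' hb' hy' h
    have := hbij.injective (a₁ := ⟨⟨x, hx⟩, ⟨b, hb⟩, ⟨y, hy⟩⟩)
      (a₂ := ⟨⟨x', hx'⟩, ⟨b', hb'⟩, ⟨y', hy'⟩⟩) h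
    simpa [Prod.ext_iff, Subtype.ext_iff] using this
  have h1X : (1 : G) ∈ X := by simp [hX]
  have haX : a ∈ X := by simp [hX]
  have h1Y : (1 : G) ∈ Y := by simp [hY]
  have hcY : c ∈ Y := by simp [hY]
  -- S g : g has a representation with x-part equal to 1
  set S : G → Prop := fun g => ∃ b ∈ B, ∃ y ∈ Y, b * y = g with hS
  have keyS : ∀ g : G, S (a * g) ↔ ¬ S g := by
    intro g
    constructor
    · rintro ⟨b, hb, y, hy, hby⟩ ⟨b', hb', y', hy', hby'⟩
      have h : a * b' * y' = 1 * b * y := by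
        rw [one_mul, hby, ← hby']; group
      exact ha (uniq a b' y' 1 b y haX hb' hy' h1X hb hy h).1
    · intro hg
      obtain ⟨x, hx, b, hb, y, hy, hxy⟩ := hsurj (a * g)
      rw [hX] at hx
      simp only [Set.mem_insert_iff, Set.mem_singleton_iff] at hx
      rcases hx with hx | hx
      · refine ⟨b, hb, y, hy, ?_⟩
        rw [hx, one_mul] at hxy
        exact hxy
      · exfalso
        apply hg
        refine ⟨b, hb, y, hy, ?_⟩
        rw [hx] at hxy
        have h : a * (b * y) = a * g := by rw [← hxy]; group
        exact mul_left_cancel h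
  have hoddS : ∀ (mm : ℕ) (g : G), S (a ^ (2 * mm + 1) * g) ↔ ¬ S g := by
    intro mm
    induction mm with
    | zero => intro g; simpa using keyS g
    | succ p ih =>
        intro g
        have hrw : a ^ (2 * (p + 1) + 1) * g = a * (a * (a ^ (2 * p + 1) * g)) := by
          have h : 2 * (p + 1) + 1 = (2 * p + 1) + 1 + 1 := by ring
          rw [h, pow_succ, pow_succ]
          group
        rw [hrw, keyS, keyS, not_not, ih]
  have horda : orderOf a = 2 := by
    rcases h2 a ha with h | h
    · exact h
    · obtain ⟨mm, hm⟩ := h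
      have h' := hoddS mm 1
      rw [← hm, pow_orderOf_eq_one, one_mul] at h'
      exact (iff_not_self h').elim
  -- S' g : g has a representation with y-part equal to 1
  set S' : G → Prop := fun g => ∃ x ∈ X, ∃ b ∈ B, x * b = g with hS'
  have keyS' : ∀ g : G, S' (g * c) ↔ ¬ S' g := by
    intro g
    constructor
    · rintro ⟨x, hx, b, hb, hxb⟩ ⟨x', hx', b', hb', hxb'⟩
      have h : x * b * 1 = x' * b' * c := by
        rw [mul_one, hxb, ← hxb']
      exact hc ((uniq x b 1 x' b' c hx hb h1Y hx' hb' hcY h).2.2).symm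
    · intro hg
      obtain ⟨x, hx, b, hb, y, hy, hxy⟩ := hsurj (g * c)
      rw [hY] at hy
      simp only [Set.mem_insert_iff, Set.mem_singleton_iff] at hy
      rcases hy with hy | hy
      · refine ⟨x, hx, b, hb, ?_⟩
        rw [hy, mul_one] at hxy
        exact hxy
      · exfalso
        apply hg
        refine ⟨x, hx, b, hb, ?_⟩
        rw [hy] at hxy
        exact mul_right_cancel hxy
  have hoddS' : ∀ (mm : ℕ) (g : G), S' (g * c ^ (2 * mm + 1)) ↔ ¬ S' g := by
    intro mm
    induction mm with
    | zero => intro g; simpa using keyS' g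
    | succ p ih =>
        intro g
        have hrw : g * c ^ (2 * (p + 1) + 1) = ((g * c ^ (2 * p + 1)) * c) * c := by
          have h : 2 * (p + 1) + 1 = (2 * p + 1) + 1 + 1 := by ring
          rw [h, pow_succ, pow_succ]
          group
        rw [hrw, keyS', keyS', not_not, ih]
  have hordc : orderOf c = 2 := by
    rcases h2 c hc with h | h
    · exact h
    · obtain ⟨mm, hm⟩ := h
      have h' := hoddS' mm 1
      rw [← hm, pow_orderOf_eq_one, mul_one] at h'
      exact (iff_not_self h').elim
  have ha2 : a * a = 1 := by
    have h := pow_orderOf_eq_one a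
    rwa [horda, pow_two] at h
  have hc2 : c * c = 1 := by
    have h := pow_orderOf_eq_one c
    rwa [hordc, pow_two] at h
  obtain ⟨u, hu⟩ := isConj_iff.mp (h1 a c horda hordc)
  have hfix : a * u⁻¹ * c = u⁻¹ := by
    rw [← hu]
    have h : a * u⁻¹ * (u * a * u⁻¹) = (a * a) * u⁻¹ := by group
    rw [h, ha2, one_mul]
  obtain ⟨x, hx, b, hb, y, hy, hxy⟩ := hsurj u⁻¹
  have hx' := hx
  rw [hX] at hx'
  simp only [Set.mem_insert_iff, Set.mem_singleton_iff] at hx'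
  have haxX : a * x ∈ X := by
    rcases hx' with h | h
    · rw [h, mul_one]; exact haX
    · rw [h, ha2]; exact h1X
  have hy' := hy
  rw [hY] at hy'
  simp only [Set.mem_insert_iff, Set.mem_singleton_iff] at hy'
  have hycY : y * c ∈ Y := by
    rcases hy' with h | h
    · rw [h, one_mul]; exact hcY
    · rw [h, hc2]; exact h1Y
  have hrep2 : (a * x) * b * (y * c) = x * b * y := by
    have h' : (a * x) * b * (y * c) = a * (x * b * y) * c := by group
    rw [h', hxy, hfix]
  have hax : a * x = x := (uniq (a * x) b (y * c) x b y haxX hb hycY hx hb hy hrep2).1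
  apply ha
  calc a = a * x * x⁻¹ := by group
    _ = x * x⁻¹ := by rw [hax]
    _ = 1 := by group

/-- Let `G` be a finite group of order `n` such that all involutions of `G` are
conjugate and each nonidentity element of `G` has either order `2` or odd order.
Then for any integer `k` with `3 ≤ k ≤ Ω(n)` (the number of prime factors of `n`
with multiplicity) and any positive integers `a 1, …, a k` with `n = a 1 ⋯ a k` and
`a 1 = a k = 2`, the group `G` has no `k`-fold factorization of the form
`(a 1, …, a k)`. -/
theorem no_factorization_with_outer_twos (G : Type*) [Group G] [Finite G]
    (h1 : ∀ x y : G, orderOf x = 2 → orderOf y = 2 → IsConj x y)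
    (h2 : ∀ x : G, x ≠ 1 → orderOf x = 2 ∨ Odd (orderOf x))
    (k : ℕ) (hk3 : 3 ≤ k) (hkΩ : k ≤ (Nat.card G).primeFactorsList.length)
    (a : Fin k → ℕ) (ha : ∀ i, 0 < a i)
    (hprod : Nat.card G = ∏ i, a i)
    (hfirst : a ⟨0, by omega⟩ = 2) (hlast : a ⟨k - 1, by omega⟩ = 2) :
    ¬ HasFactorization G a := by
  obtain ⟨m, rfl⟩ : ∃ m, k = m + 2 := ⟨k - 2, by omega⟩
  rintro ⟨A, hA, hn, hprodset⟩
  set Mlist : List (Set G) := List.ofFn (fun i : Fin m => A (Fin.succ (Fin.castSucc i)))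
    with hM
  set B : Set G := Mlist.prod with hB
  have hsplit : (List.ofFn A).prod = A 0 * (B * A (Fin.succ (Fin.last m))) := by
    rw [List.ofFn_succ, List.prod_cons,
      List.ofFn_succ' (fun i : Fin (m + 1) => A i.succ), List.prod_concat, hB, hM]
  have hU : A 0 * (B * A (Fin.succ (Fin.last m))) = Set.univ := by
    rw [← hsplit]; exact hprodset
  have hlastidx : (Fin.succ (Fin.last m)) = (⟨m + 2 - 1, by omega⟩ : Fin (m + 2)) := by
    ext; simp [Fin.last]
  have hcard0 : (A 0).ncard = 2 := by
    rw [← Nat.card_coe_set_eq, hA 0]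
    exact hfirst
  have hcardl : (A (Fin.succ (Fin.last m))).ncard = 2 := by
    rw [← Nat.card_coe_set_eq, hA _, hlastidx]
    exact hlast
  obtain ⟨x₁, x₂, hx12, hA0⟩ := Set.ncard_eq_two.mp hcard0
  obtain ⟨y₁, y₂, hy12, hAl⟩ := Set.ncard_eq_two.mp hcardl
  obtain ⟨a', ha'def⟩ : ∃ z : G, z = x₁⁻¹ * x₂ := ⟨_, rfl⟩
  obtain ⟨c', hc'def⟩ : ∃ z : G, z = y₂ * y₁⁻¹ := ⟨_, rfl⟩
  have ha' : a' ≠ 1 := by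
    intro h
    apply hx12
    have h2' : x₂ = x₁ * a' := by rw [ha'def]; group
    rw [h, mul_one] at h2'
    exact h2'.symm
  have hc' : c' ≠ 1 := by
    intro h
    apply hy12
    have h2' : y₂ = c' * y₁ := by rw [hc'def]; group
    rw [h, one_mul] at h2'
    exact h2'.symm
  have hsize : 4 * Nat.card B ≤ Nat.card G := by
    have hb1 : Nat.card B ≤ (Mlist.map fun s : Set G => Nat.card ↥s).prod :=
      card_setListProd_le Mlist
    have hb2 : (Mlist.map fun s : Set G => Nat.card ↥s).prod
        = ∏ i : Fin m, a (Fin.succ (Fin.castSucc i)) := by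
      rw [hM, List.map_ofFn, List.prod_ofFn]
      exact Finset.prod_congr rfl fun i _ => hA _
    have hb3 : (∏ i, a i)
        = a 0 * ((∏ i : Fin m, a (Fin.succ (Fin.castSucc i))) * a (Fin.succ (Fin.last m))) := by
      rw [Fin.prod_univ_succ]
      congr 1
      rw [Fin.prod_univ_castSucc]
    have hb4 : a 0 = 2 := hfirst
    have hb5 : a (Fin.succ (Fin.last m)) = 2 := by rw [hlastidx]; exact hlast
    rw [hprod, hb3, hb4, hb5]
    rw [hb2] at hb1
    omega
  have hsurj : ∀ g : G, ∃ x ∈ ({1, a'} : Set G), ∃ b ∈ B, ∃ y ∈ ({1, c'} : Set G),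
      x * b * y = g := by
    intro g
    have hmem : x₁ * g * y₁ ∈ A 0 * (B * A (Fin.succ (Fin.last m))) := by
      rw [hU]; trivial
    rw [Set.mem_mul] at hmem
    obtain ⟨v, hv, w, hw, hvw⟩ := hmem
    rw [Set.mem_mul] at hw
    obtain ⟨b, hb, z, hz, hbz⟩ := hw
    rw [hA0] at hv
    rw [hAl] at hz
    simp only [Set.mem_insert_iff, Set.mem_singleton_iff] at hv hz
    obtain ⟨x', hx', hvx⟩ : ∃ x' ∈ ({1, a'} : Set G), v = x₁ * x' := by
      rcases hv with hv | hv
      · exact ⟨1, by simp, by rw [hv, mul_one]⟩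
      · exact ⟨a', by simp, by rw [hv, ha'def]; group⟩
    obtain ⟨y', hy', hzy⟩ : ∃ y' ∈ ({1, c'} : Set G), z = y' * y₁ := by
      rcases hz with hz | hz
      · exact ⟨1, by simp, by rw [hz, one_mul]⟩
      · exact ⟨c', by simp, by rw [hz, hc'def]; group⟩
    refine ⟨x', hx', b, hb, y', hy', ?_⟩
    have hcalc : x₁ * (x' * b * y') * y₁ = x₁ * g * y₁ := by
      rw [← hvw, ← hbz, hvx, hzy]
      group
    exact mul_left_cancel (mul_right_cancel hcalc)
  exact key_triple h1 h2 B a' c' ha' hc' hsize hsurj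
end

section
/- If G is a finite supersolvable group, then G is multifold-factorizable: for every k ≥ 2 and every factorization |G| = a_1⋯a_k into integers a_i > 1, G has a k-fold factorization of the form (a_1, ..., a_k). -/
open Pointwise

/-- `G` is `k`-factorizable: for every factorization `|G| = a 1 ⋯ a k` into integers
`a i > 1`, `G` has a `k`-fold factorization of the form `(a 1, …, a k)`. -/
def IsKFactorizable (G : Type*) [Group G] (k : ℕ) : Prop :=
  ∀ a : Fin k → ℕ, (∀ i, 1 < a i) → Nat.card G = ∏ i, a i → HasFactorization G a

/-- `G` is multifold-factorizable if it is `k`-factorizable for every `k ≥ 2`. -/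
def IsMultifoldFactorizable (G : Type*) [Group G] : Prop :=
  ∀ k : ℕ, 2 ≤ k → IsKFactorizable G k

/-- A group is supersolvable if it possesses a finite normal series
`⊥ = s 0 ≤ s 1 ≤ … ≤ s n = ⊤` with all terms normal in the whole group and all
successive factor groups cyclic (equivalently, each `s (i+1)` is generated by
`s i` together with a single element). -/
def IsSupersolvable (G : Type*) [Group G] : Prop :=
  ∃ (n : ℕ) (s : Fin (n + 1) → Subgroup G),
    s 0 = ⊥ ∧ s (Fin.last n) = ⊤ ∧
    (∀ i, (s i).Normal) ∧
    (∀ i : Fin n, s i.castSucc ≤ s i.succ) ∧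
    (∀ i : Fin n, ∃ x : G, s i.succ = s i.castSucc ⊔ Subgroup.closure {x})

section Aux

variable {G : Type*} [Group G]

/-- A normal subgroup commutes (setwise) with every subset. -/
lemma MF.coe_mul_comm (N : Subgroup G) (hN : N.Normal) (Y : Set G) :
    Y * (N : Set G) = (N : Set G) * Y := by
  ext g
  simp only [Set.mem_mul]
  constructor
  · rintro ⟨y, hy, n, hn, rfl⟩
    exact ⟨y * n * y⁻¹, hN.conj_mem n hn y, y, hy, by group⟩
  · rintro ⟨n, hn, y, hy, rfl⟩
    exact ⟨y, hy, y⁻¹ * n * y, by simpa using hN.conj_mem n hn y⁻¹, by group⟩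

/-- Multiplying a set on the right by a subgroup saturates it for the quotient map. -/
lemma MF.mul_coe_eq_preimage (N : Subgroup G) (X : Set G) :
    X * (N : Set G) =
      QuotientGroup.mk ⁻¹' ((QuotientGroup.mk '' X : Set (G ⧸ N))) := by
  ext g
  simp only [Set.mem_mul, Set.mem_preimage, Set.mem_image]
  constructor
  · rintro ⟨x, hx, n, hn, rfl⟩
    exact ⟨x, hx, (QuotientGroup.eq.mpr (by simpa using hn)).symm⟩
  · rintro ⟨x, hx, hxg⟩
    have h : x⁻¹ * g ∈ N := QuotientGroup.eq.mp hxg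
    exact ⟨x, hx, x⁻¹ * g, h, by group⟩

lemma MF.image_listProd {H : Type*} [Group H] (f : G →* H) :
    ∀ l : List (Set G), f '' l.prod = (l.map (fun S => f '' S)).prod
  | [] => by simp [Set.singleton_one]
  | S :: l => by
    simp only [List.prod_cons, List.map_cons, Set.image_mul, MF.image_listProd f l]

lemma MF.prod_ofFn_mul : ∀ (k : ℕ) (X C : Fin k → Set G),
    (∀ i (Y : Set G), Y * C i = C i * Y) →
    (List.ofFn (fun i => X i * C i)).prod = (List.ofFn X).prod * (List.ofFn C).prod := by
  intro k
  induction k with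
  | zero => intro X C _; simp
  | succ k ih =>
    intro X C hC
    simp only [List.ofFn_succ, List.prod_cons]
    rw [ih (fun i => X (Fin.succ i)) (fun i => C (Fin.succ i)) (fun i Y => hC (Fin.succ i) Y)]
    exact Commute.mul_mul_mul_comm ((hC 0 _).symm) _ _

lemma MF.prod_ofFn_ite : ∀ (k : ℕ) (j : Fin k) (C : Set G),
    (List.ofFn (fun i => if i = j then C else 1)).prod = C := by
  intro k
  induction k with
  | zero => exact fun j => j.elim0
  | succ k ih =>
    intro j C
    refine Fin.cases ?_ ?_ j
    · have h1 : (fun i : Fin k => if Fin.succ i = 0 then C else 1) = fun _ => (1 : Set G) := by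
        funext i; simp [Fin.succ_ne_zero]
      simp [List.ofFn_succ, List.prod_cons, h1, List.ofFn_const, List.prod_replicate]
    · intro j'
      simp only [List.ofFn_succ, List.prod_cons, if_neg (Fin.succ_ne_zero j').symm]
      have : (fun i : Fin k => if Fin.succ i = Fin.succ j' then C else 1)
          = fun i : Fin k => if i = j' then C else 1 := by
        funext i; simp [Fin.succ_inj]
      rw [this, ih j' C, one_mul]

lemma MF.isSupersolvable_quotient (h : IsSupersolvable G) (N : Subgroup G) [N.Normal] :
    IsSupersolvable (G ⧸ N) := by
  obtain ⟨n, s, h0, hl, hn, hm, hg⟩ := h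
  refine ⟨n, fun i => (s i).map (QuotientGroup.mk' N), ?_, ?_, ?_, ?_, ?_⟩
  · show (s 0).map (QuotientGroup.mk' N) = ⊥
    rw [h0, Subgroup.map_bot]
  · show (s (Fin.last n)).map (QuotientGroup.mk' N) = ⊤
    rw [hl, Subgroup.map_top_of_surjective _ (QuotientGroup.mk'_surjective N)]
  · intro i; exact Subgroup.Normal.map (hn i) _ (QuotientGroup.mk'_surjective N)
  · intro i; exact Subgroup.map_mono (hm i)
  · intro i
    obtain ⟨x, hx⟩ := hg i
    refine ⟨QuotientGroup.mk' N x, ?_⟩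
    show (s i.succ).map (QuotientGroup.mk' N)
      = (s i.castSucc).map (QuotientGroup.mk' N) ⊔ Subgroup.closure {QuotientGroup.mk' N x}
    rw [hx, Subgroup.map_sup, MonoidHom.map_closure, Set.image_singleton]

lemma MF.exists_normal_prime [Finite G] (h : IsSupersolvable G) (hG : Nat.card G ≠ 1) :
    ∃ (N : Subgroup G) (p : ℕ), p.Prime ∧ N.Normal ∧ Nat.card N = p := by
  obtain ⟨n, s, h0, hl, hn, _, hg⟩ := h
  have hnt : Nontrivial G := by
    rcases (Nat.one_le_iff_ne_zero.mpr (Nat.card_pos (α := G)).ne').lt_or_eq with h1 | h1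
    · exact Finite.one_lt_card_iff_nontrivial.mp h1
    · exact absurd h1.symm hG
  -- find the first nontrivial term of the series
  have hstep : ∃ j : Fin n, s j.castSucc = ⊥ ∧ s j.succ ≠ ⊥ := by
    by_contra hc
    push_neg at hc
    have hall : ∀ i : Fin (n + 1), s i = ⊥ := by
      intro i
      induction i using Fin.induction with
      | zero => exact h0
      | succ j ihj => exact hc j ihj
    obtain ⟨g, hg1⟩ := exists_ne (1 : G)
    have : g ∈ s (Fin.last n) := hl ▸ Subgroup.mem_top g
    rw [hall (Fin.last n), Subgroup.mem_bot] at this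
    exact hg1 this
  obtain ⟨j, hbot, hne⟩ := hstep
  obtain ⟨x, hx⟩ := hg j
  rw [hbot, bot_sup_eq, ← Subgroup.zpowers_eq_closure] at hx
  have hxnorm : (Subgroup.zpowers x).Normal := hx ▸ hn j.succ
  have hx1 : x ≠ 1 := by
    intro hx1
    apply hne
    rw [hx, hx1, Subgroup.zpowers_eq_bot]
  have hord : orderOf x ≠ 1 := fun h1 => hx1 (orderOf_eq_one_iff.mp h1)
  obtain ⟨p, hp, hpd⟩ := Nat.exists_prime_and_dvd hord
  set d := orderOf x / p with hd
  set y := x ^ d with hy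
  have hdd : d ∣ orderOf x := Nat.div_dvd_of_dvd hpd
  have hordy : orderOf y = p := by
    rw [hy, orderOf_pow x, Nat.gcd_eq_right hdd, hd,
      Nat.div_div_self hpd (orderOf_pos x).ne']
  -- conjugates of y stay in zpowers y
  have hconj : ∀ g : G, g * y * g⁻¹ ∈ Subgroup.zpowers y := by
    intro g
    obtain ⟨m, hm⟩ := (Subgroup.mem_zpowers_iff).mp
      (hxnorm.conj_mem x (Subgroup.mem_zpowers x) g)
    have : g * y * g⁻¹ = y ^ m := by
      rw [hy, ← conj_pow, ← hm]
      rw [← zpow_natCast (x ^ m) d, ← zpow_mul, mul_comm m (d : ℤ), zpow_mul,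
        zpow_natCast]
    rw [this]
    exact zpow_mem (Subgroup.mem_zpowers y) m
  refine ⟨Subgroup.zpowers y, p, hp, ⟨?_⟩, by rw [Nat.card_zpowers, hordy]⟩
  intro h hh g
  obtain ⟨t, ht⟩ := Subgroup.mem_zpowers_iff.mp hh
  have : g * h * g⁻¹ = (g * y * g⁻¹) ^ t := by rw [conj_zpow, ht]
  rw [this]
  exact zpow_mem (hconj g) t

lemma MF.card_preimage (N : Subgroup G) (S : Set (G ⧸ N)) :
    Nat.card (QuotientGroup.mk ⁻¹' S : Set G) = Nat.card N * Nat.card S := by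
  rw [Nat.card_congr (QuotientGroup.preimageMkEquivSubgroupProdSet N S), Nat.card_prod]

end Aux

universe u

theorem MF.factorization_aux : ∀ (n : ℕ) (G : Type u) [Group G] [Finite G],
    IsSupersolvable G → Nat.card G ≤ n →
    ∀ (k : ℕ) (a : Fin k → ℕ), Nat.card G = ∏ i, a i → HasFactorization G a := by
  intro n
  induction n with
  | zero =>
    intro G _ _ _ hle
    exact absurd hle (Nat.card_pos (α := G)).not_ge
  | succ n ih =>
    intro G _ _ hss hle k a hcard
    by_cases hall : ∀ i, a i = 1
    · -- all `a i = 1`, so `G` is trivial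
      have hG1 : Nat.card G = 1 := by
        rw [hcard]; exact Finset.prod_eq_one (fun i _ => hall i)
      have hsub : Subsingleton G := (Nat.card_eq_one_iff_unique.mp hG1).1
      refine ⟨fun _ => (1 : Set G), fun i => ?_, hcard, ?_⟩
      · rw [hall i, ← Set.singleton_one]; exact Nat.card_unique
      · rw [List.ofFn_const, List.prod_replicate, one_pow]
        ext g
        simp only [← Set.singleton_one, Set.mem_singleton_iff, Set.mem_univ, iff_true]
        exact Subsingleton.elim g 1
    · push_neg at hall
      obtain ⟨i₀, hi₀⟩ := hall
      have hG1 : Nat.card G ≠ 1 := by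
        intro h1
        exact hi₀ (Nat.dvd_one.mp (h1 ▸ hcard ▸
          Finset.dvd_prod_of_mem a (Finset.mem_univ i₀)))
      obtain ⟨N, p, hp, hNn, hNcard⟩ := MF.exists_normal_prime hss hG1
      haveI := hNn
      have hpdvd : p ∣ Nat.card G := hNcard ▸ Subgroup.card_subgroup_dvd_card N
      obtain ⟨j, -, hpj⟩ := hp.prime.exists_mem_finset_dvd (hcard ▸ hpdvd)
      set ab : Fin k → ℕ := Function.update a j (a j / p) with hab
      have hGq : Nat.card G = Nat.card (G ⧸ N) * p :=
        hNcard ▸ Subgroup.card_eq_card_quotient_mul_card_subgroup N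
      have hprod : ∏ i, a i = p * ∏ i, ab i := by
        rw [hab, Finset.prod_update_of_mem (Finset.mem_univ j),
          ← Finset.mul_prod_erase Finset.univ a (Finset.mem_univ j),
          ← Finset.sdiff_singleton_eq_erase, ← mul_assoc,
          Nat.mul_div_cancel' hpj]
      have hqcard : Nat.card (G ⧸ N) = ∏ i, ab i := by
        have h1 : Nat.card (G ⧸ N) * p = (∏ i, ab i) * p := by
          rw [← hGq, hcard, hprod, mul_comm]
        exact Nat.eq_of_mul_eq_mul_right hp.pos h1
      have hqlt : Nat.card (G ⧸ N) ≤ n := by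
        have h2 : Nat.card (G ⧸ N) < Nat.card G := by
          rw [hGq]
          exact Nat.lt_mul_iff_one_lt_right Nat.card_pos |>.mpr hp.one_lt
        omega
      obtain ⟨Ab, hAbcard, -, hAbprod⟩ :=
        ih (G ⧸ N) (MF.isSupersolvable_quotient hss N) hqlt k ab hqcard
      -- lift the factorization
      set σ : G ⧸ N → G := Quotient.out with hσdef
      have hσ : ∀ q : G ⧸ N, QuotientGroup.mk (σ q) = q := fun q => Quotient.out_eq q
      have hσli : Function.LeftInverse (QuotientGroup.mk : G → G ⧸ N) σ := hσ
      have hσinj : Function.Injective σ := hσli.injective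
      set X : Fin k → Set G := fun i => σ '' Ab i with hX
      set C : Fin k → Set G := fun i => if i = j then (N : Set G) else 1 with hC
      have himg : ∀ i, QuotientGroup.mk '' X i = Ab i := by
        intro i
        rw [hX, Set.image_image]
        simp only [hσ, Set.image_id']
      have hCj : C j = (N : Set G) := by simp [hC]
      have hCne : ∀ i, i ≠ j → C i = 1 := by intro i hij; simp [hC, hij]
      have hCcomm : ∀ i (Y : Set G), Y * C i = C i * Y := by
        intro i Y
        by_cases hij : i = j
        · rw [hij, hCj]; exact MF.coe_mul_comm N hNn Y
        · rw [hCne i hij, mul_one, one_mul]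
      refine ⟨fun i => X i * C i, ?_, hcard, ?_⟩
      · intro i
        show Nat.card (X i * C i : Set G) = a i
        by_cases hij : i = j
        · subst hij
          rw [hCj, MF.mul_coe_eq_preimage N (X i), himg i, MF.card_preimage, hNcard,
            hAbcard i, hab, Function.update_self]
          exact Nat.mul_div_cancel' hpj
        · rw [hCne i hij, mul_one]
          have hXi : X i = σ '' Ab i := rfl
          rw [hXi, Nat.card_image_of_injective hσinj, hAbcard i, hab,
            Function.update_of_ne hij]
      · show (List.ofFn fun i => X i * C i).prod = Set.univ
        rw [MF.prod_ofFn_mul k X C hCcomm, MF.prod_ofFn_ite k j (N : Set G),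
          MF.mul_coe_eq_preimage N]
        have himgprod : QuotientGroup.mk (s := N) '' (List.ofFn X).prod = (Set.univ : Set (G ⧸ N)) := by
          have := MF.image_listProd (QuotientGroup.mk' N) (List.ofFn X)
          rw [QuotientGroup.coe_mk'] at this
          rw [this, List.map_ofFn]
          have : (QuotientGroup.mk (s := N) '' ·) ∘ X = Ab := by
            funext i; exact himg i
          rw [this, hAbprod]
        rw [himgprod, Set.preimage_univ]


/-- If `G` is a finite supersolvable group, then `G` is multifold-factorizable. -/
theorem isMultifoldFactorizable_of_isSupersolvable (G : Type*) [Group G] [Finite G]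
    (h : IsSupersolvable G) : IsMultifoldFactorizable G := by
  intro k _ a _ hcard
  exact MF.factorization_aux (Nat.card G) G h le_rfl k a hcard
end

section
/- Let p be a prime with p ≡ 1 (mod 4) and let n ≥ 1 be an integer. Every group of order 4·p^n is supersolvable. -/
open Pointwise

lemma isSupersolvable_of_isCyclic (G : Type*) [Group G] [IsCyclic G] :
    IsSupersolvable G := by
  obtain ⟨x, hx⟩ := IsCyclic.exists_generator (α := G)
  refine ⟨1, ![⊥, ⊤], rfl, rfl, ?_, ?_, ?_⟩
  · intro i
    fin_cases i
    · show (⊥ : Subgroup G).Normal; infer_instance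
    · show (⊤ : Subgroup G).Normal; infer_instance
  · intro i
    fin_cases i
    show (⊥ : Subgroup G) ≤ ⊤
    exact bot_le
  · intro i
    fin_cases i
    refine ⟨x, ?_⟩
    show (⊤ : Subgroup G) = ⊥ ⊔ Subgroup.closure {x}
    have : Subgroup.closure {x} = ⊤ := by
      rw [← Subgroup.zpowers_eq_closure]
      exact (Subgroup.eq_top_iff' _).mpr hx
    simp [this]

lemma comap_sup_closure_eq {G H : Type*} [Group G] [Group H] (π : G →* H)
    (T : Subgroup H) [hT : T.Normal] (x : G) :
    Subgroup.comap π (T ⊔ Subgroup.closure {π x}) =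
      Subgroup.comap π T ⊔ Subgroup.closure {x} := by
  apply le_antisymm
  · intro g hg
    rw [Subgroup.mem_comap] at hg
    have hg' : π g ∈ (↑T * ↑(Subgroup.closure {π x}) : Set H) := by
      rw [← Subgroup.normal_mul]; exact hg
    obtain ⟨t, ht, c, hc, htc⟩ := hg'
    rw [SetLike.mem_coe, Subgroup.mem_closure_singleton] at hc
    obtain ⟨k, hk⟩ := hc
    have hg₁ : g * x ^ (-k) ∈ Subgroup.comap π T := by
      rw [Subgroup.mem_comap, map_mul, map_zpow]
      have h2 : π g * (π x) ^ (-k) = t := by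
        rw [← htc, ← hk, mul_assoc, ← zpow_add, add_neg_cancel, zpow_zero, mul_one]
      rw [h2]; exact ht
    have h3 : g = (g * x ^ (-k)) * x ^ k := by
      rw [mul_assoc, ← zpow_add, neg_add_cancel, zpow_zero, mul_one]
    rw [h3]
    have hx' : x ^ k ∈ Subgroup.closure {x} :=
      Subgroup.zpow_mem _ (Subgroup.subset_closure (Set.mem_singleton x)) k
    exact Subgroup.mul_mem _ (Subgroup.mem_sup_left hg₁) (Subgroup.mem_sup_right hx')
  · refine sup_le (Subgroup.comap_mono le_sup_left) ?_
    rw [Subgroup.closure_le]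
    rintro y rfl
    exact Subgroup.mem_comap.mpr (Subgroup.mem_sup_right (Subgroup.subset_closure rfl))

lemma isSupersolvable_of_quotient (G : Type*) [Group G] (N : Subgroup G) [hNn : N.Normal]
    (x₀ : G) (hN : N = Subgroup.closure {x₀}) (h : IsSupersolvable (G ⧸ N)) :
    IsSupersolvable G := by
  obtain ⟨m, s, hs0, hslast, hsnorm, hsmono, hsgen⟩ := h
  have hπsurj : Function.Surjective (QuotientGroup.mk' N) := QuotientGroup.mk'_surjective N
  refine ⟨m + 1, Fin.cases ⊥ (fun i => Subgroup.comap (QuotientGroup.mk' N) (s i)),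
    ?_, ?_, ?_, ?_, ?_⟩
  · rfl
  · rw [← Fin.succ_last]
    simp only [Fin.cases_succ, hslast]
    exact Subgroup.comap_top _
  · intro i
    induction i using Fin.cases with
    | zero => show (⊥ : Subgroup G).Normal; infer_instance
    | succ j => exact (hsnorm j).comap _
  · intro i
    induction i using Fin.cases with
    | zero => simp
    | succ j =>
      simp only [← Fin.succ_castSucc, Fin.cases_succ]
      exact Subgroup.comap_mono (hsmono j)
  · intro i
    induction i using Fin.cases with
    | zero =>
      refine ⟨x₀, ?_⟩
      simp only [Fin.cases_succ, Fin.castSucc_zero, Fin.cases_zero, hs0, bot_sup_eq]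
      exact ((MonoidHom.comap_bot _).trans (QuotientGroup.ker_mk' N)).trans hN
    | succ j =>
      obtain ⟨xb, hxb⟩ := hsgen j
      obtain ⟨x, rfl⟩ := hπsurj xb
      refine ⟨x, ?_⟩
      simp only [← Fin.succ_castSucc, Fin.cases_succ, hxb]
      exact comap_sup_closure_eq _ _ _


lemma exists_eigenvec {p : ℕ} [Fact p.Prime] {M : Type*} [AddCommGroup M] [Module (ZMod p) M]
    (i : ZMod p) (hi : i ^ 2 = -1)
    (T : Module.End (ZMod p) M) (hT : T ^ 4 = 1)
    (W : Submodule (ZMod p) M) (hinv : ∀ w ∈ W, T w ∈ W)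
    (w : M) (hwW : w ∈ W) (hw : w ≠ 0) :
    ∃ (ζ : ZMod p) (v : M), v ∈ W ∧ v ≠ 0 ∧ T v = ζ • v := by
  have h4 : ∀ x : M, T (T (T (T x))) = x := by
    intro x
    have h := LinearMap.ext_iff.mp hT x
    simpa [pow_succ, Module.End.mul_apply] using h
  set a := T w + i • w with ha
  set b := T a - i • a with hb
  set c := T b + b with hc
  have hbw : b = T (T w) + w := by
    rw [hb, ha, map_add, map_smul]
    match_scalars
    · ring
    · ring
    · linear_combination -hi
  have haW : a ∈ W := W.add_mem (hinv w hwW) (W.smul_mem _ hwW)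
  have hbW : b ∈ W := W.sub_mem (hinv a haW) (W.smul_mem _ haW)
  have hcW : c ∈ W := W.add_mem (hinv b hbW) hbW
  have hcd : T c - c = 0 := by
    rw [hc, hbw]
    simp only [map_add]
    rw [h4]
    abel
  by_cases hc0 : c = 0
  · by_cases hb0 : b = 0
    · by_cases ha0 : a = 0
      · refine ⟨-i, w, hwW, hw, ?_⟩
        have : T w + i • w = 0 := ha ▸ ha0
        rw [neg_smul]
        exact eq_neg_of_add_eq_zero_left this
      · refine ⟨i, a, haW, ha0, ?_⟩
        have : T a - i • a = 0 := hb ▸ hb0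
        exact sub_eq_zero.mp this
    · refine ⟨-1, b, hbW, hb0, ?_⟩
      have h0 : T b + b = 0 := hc ▸ hc0
      rw [neg_one_smul]
      exact eq_neg_of_add_eq_zero_left h0
  · refine ⟨1, c, hcW, hc0, ?_⟩
    rw [one_smul]
    exact sub_eq_zero.mp hcd

lemma exists_common_eigenvector {p : ℕ} [Fact p.Prime] {M : Type*} [AddCommGroup M]
    [Module (ZMod p) M] [Module.Finite (ZMod p) M]
    (i : ZMod p) (hi : i ^ 2 = -1)
    {ι : Type*} (f : ι → Module.End (ZMod p) M)
    (hcomm : ∀ j k, f j * f k = f k * f j)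
    (hpow : ∀ j, (f j) ^ 4 = 1) :
    ∀ (k : ℕ) (W : Submodule (ZMod p) M), Module.finrank (ZMod p) W = k → W ≠ ⊥ →
      (∀ j, ∀ w ∈ W, f j w ∈ W) →
      ∃ v ∈ W, v ≠ 0 ∧ ∀ j, ∃ c : ZMod p, f j v = c • v := by
  intro k
  induction k using Nat.strong_induction_on with
  | _ k IH =>
    intro W hrank hW hinv
    by_cases hall : ∀ j, ∃ c : ZMod p, ∀ w ∈ W, f j w = c • w
    · obtain ⟨v, hvW, hv0⟩ := Submodule.exists_mem_ne_zero_of_ne_bot hW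
      exact ⟨v, hvW, hv0, fun j => (hall j).imp fun c hc => hc v hvW⟩
    · push_neg at hall
      obtain ⟨j₀, hj₀⟩ := hall
      obtain ⟨w, hwW, hw0⟩ := Submodule.exists_mem_ne_zero_of_ne_bot hW
      obtain ⟨ζ, v, hvW, hv0, hv⟩ :=
        exists_eigenvec i hi (f j₀) (hpow j₀) W (hinv j₀) w hwW hw0
      set W' := W ⊓ LinearMap.ker (f j₀ - ζ • (1 : Module.End (ZMod p) M)) with hW'
      have hvW' : v ∈ W' := by
        refine Submodule.mem_inf.mpr ⟨hvW, ?_⟩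
        rw [LinearMap.mem_ker, LinearMap.sub_apply, LinearMap.smul_apply, Module.End.one_apply,
          hv, sub_self]
      have hW'inv : ∀ j, ∀ x ∈ W', f j x ∈ W' := by
        intro j x hx
        obtain ⟨hx1, hx2⟩ := Submodule.mem_inf.mp hx
        rw [LinearMap.mem_ker, LinearMap.sub_apply, LinearMap.smul_apply, Module.End.one_apply,
          sub_eq_zero] at hx2
        refine Submodule.mem_inf.mpr ⟨hinv j x hx1, ?_⟩
        rw [LinearMap.mem_ker, LinearMap.sub_apply, LinearMap.smul_apply, Module.End.one_apply,
          sub_eq_zero]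
        have h1 : f j₀ (f j x) = f j (f j₀ x) := by
          have := LinearMap.ext_iff.mp (hcomm j₀ j) x
          simpa [Module.End.mul_apply] using this
        rw [h1, hx2, map_smul]
      have hW'lt : W' < W := by
        refine lt_of_le_of_ne inf_le_left ?_
        intro hEq
        obtain ⟨x, hxW, hxne⟩ := hj₀ ζ
        apply hxne
        have hx : x ∈ W' := hEq ▸ hxW
        have hx2 := (Submodule.mem_inf.mp hx).2
        rwa [LinearMap.mem_ker, LinearMap.sub_apply, LinearMap.smul_apply, Module.End.one_apply,
          sub_eq_zero] at hx2
      have hlt : Module.finrank (ZMod p) W' < k :=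
        hrank ▸ Submodule.finrank_lt_finrank_of_lt hW'lt
      obtain ⟨u, huW', hu0, hu⟩ := IH _ hlt W' rfl
        (Submodule.ne_bot_iff _ |>.mpr ⟨v, hvW', hv0⟩) hW'inv
      exact ⟨u, inf_le_left (a := W) huW', hu0, hu⟩

def myZModModule {p : ℕ} [NeZero p] {M : Type*} [AddCommGroup M] (h : ∀ x : M, p • x = 0) :
    Module (ZMod p) M := AddCommGroup.zmodModule h

lemma exists_normal_generator {p : ℕ} (hp : p.Prime) (hmod : p % 4 = 1)
    {G : Type*} [Group G] [Finite G] (V : Subgroup G) [hVn : V.Normal]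
    (hVcomm : ∀ x y : G, x ∈ V → y ∈ V → x * y = y * x)
    (hVexp : ∀ x ∈ V, x ^ p = 1)
    (hVnt : ∃ x ∈ V, x ≠ 1)
    (hact4 : ∀ g : G, ∀ x ∈ V, g ^ 4 * x * (g ^ 4)⁻¹ = x)
    (hactcomm : ∀ g h : G, ∀ x ∈ V, g * h * x * (g * h)⁻¹ = h * g * x * (h * g)⁻¹) :
    ∃ v : G, v ∈ V ∧ v ≠ 1 ∧ ∀ g : G, ∃ m : ℕ, g * v * g⁻¹ = v ^ m := by
  haveI hpf : Fact p.Prime := ⟨hp⟩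
  haveI : NeZero p := ⟨hp.ne_zero⟩
  letI : CommGroup ↥V :=
    { (inferInstance : Group ↥V) with
      mul_comm := fun x y => Subtype.ext (hVcomm x y x.2 y.2) }
  letI : Module (ZMod p) (Additive ↥V) := myZModModule (by
    intro x
    apply Additive.toMul.injective
    rw [toMul_nsmul, toMul_zero]
    exact Subtype.ext (by
      push_cast
      exact hVexp _ x.toMul.2))
  have conjmem : ∀ g : G, ∀ x : ↥V, g * (x : G) * g⁻¹ ∈ V := fun g x => hVn.conj_mem x x.2 g
  let φ : G → (↥V →* ↥V) := fun g =>
    { toFun := fun x => ⟨g * x * g⁻¹, conjmem g x⟩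
      map_one' := by ext; simp
      map_mul' := by intro x y; ext; push_cast; group }
  let f : G → (Additive ↥V →ₗ[ZMod p] Additive ↥V) := fun g =>
    (MonoidHom.toAdditive (φ g)).toZModLinearMap p
  have fapp : ∀ (g : G) (x : Additive ↥V),
      ((Additive.toMul (f g x) : ↥V) : G) = g * ((Additive.toMul x : ↥V) : G) * g⁻¹ := fun g x => rfl
  have hcomm : ∀ g h : G, f g * f h = f h * f g := by
    intro g h
    apply LinearMap.ext
    intro x
    apply Additive.toMul.injective
    apply Subtype.ext
    rw [Module.End.mul_apply, Module.End.mul_apply, fapp, fapp, fapp, fapp]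
    have e1 : g * (h * ((x.toMul : ↥V) : G) * h⁻¹) * g⁻¹
        = g * h * ((x.toMul : ↥V) : G) * (g * h)⁻¹ := by group
    have e2 : h * (g * ((x.toMul : ↥V) : G) * g⁻¹) * h⁻¹
        = h * g * ((x.toMul : ↥V) : G) * (h * g)⁻¹ := by group
    rw [e1, e2]
    exact hactcomm g h _ (x.toMul).2
  have hpow : ∀ g : G, (f g) ^ 4 = 1 := by
    intro g
    apply LinearMap.ext
    intro x
    apply Additive.toMul.injective
    apply Subtype.ext
    have e : ((f g) ^ 4) x = f g (f g (f g (f g x))) := by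
      rw [show (4 : ℕ) = 3 + 1 from rfl, pow_succ, Module.End.mul_apply,
        show (3 : ℕ) = 2 + 1 from rfl, pow_succ, Module.End.mul_apply,
        show (2 : ℕ) = 1 + 1 from rfl, pow_succ, Module.End.mul_apply, pow_one]
    rw [e, fapp, fapp, fapp, fapp]
    have e2 : g * (g * (g * (g * ((x.toMul : ↥V) : G) * g⁻¹) * g⁻¹) * g⁻¹) * g⁻¹
        = g ^ 4 * ((x.toMul : ↥V) : G) * (g ^ 4)⁻¹ := by
      have h4 : g ^ 4 = g * g * g * g := by rw [pow_succ, pow_succ, pow_succ, pow_one]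
      rw [h4]; group
    rw [e2]
    exact hact4 g _ (x.toMul).2
  obtain ⟨x₀, hx₀V, hx₀1⟩ := hVnt
  haveI : Nontrivial (Additive ↥V) := by
    refine ⟨⟨Additive.ofMul ⟨x₀, hx₀V⟩, 0, ?_⟩⟩
    intro h
    apply hx₀1
    have : ((⟨x₀, hx₀V⟩ : ↥V) : G) = ((1 : ↥V) : G) := by
      exact congrArg _ (Additive.ofMul.injective (by rw [h]; rfl))
    simpa using this
  obtain ⟨r, hr⟩ : IsSquare (-1 : ZMod p) := by
    rw [ZMod.exists_sq_eq_neg_one_iff]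
    omega
  have hi : r ^ 2 = -1 := by rw [sq]; exact hr.symm
  obtain ⟨v, hvW, hv0, hv⟩ := exists_common_eigenvector r hi f hcomm hpow
    (Module.finrank (ZMod p) (⊤ : Submodule (ZMod p) (Additive ↥V))) ⊤ rfl
    (by
      intro htop
      obtain ⟨x, y, hxy⟩ := exists_pair_ne (Additive ↥V)
      apply hxy
      have hx : x ∈ (⊤ : Submodule (ZMod p) (Additive ↥V)) := Submodule.mem_top
      have hy : y ∈ (⊤ : Submodule (ZMod p) (Additive ↥V)) := Submodule.mem_top
      rw [htop, Submodule.mem_bot] at hx hy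
      rw [hx, hy])
    (fun j w _ => Submodule.mem_top)
  refine ⟨((v.toMul : ↥V) : G), (v.toMul).2, ?_, ?_⟩
  · intro h
    apply hv0
    apply Additive.toMul.injective
    exact Subtype.ext h
  · intro g
    obtain ⟨c, hc⟩ := hv g
    refine ⟨c.val, ?_⟩
    have h1 : f g v = c.val • v := by
      have hcv : ((c.val : ℕ) : ZMod p) = c := by rw [ZMod.natCast_val, ZMod.cast_id]
      rw [hc]
      conv_lhs => rw [← hcv]
      rw [Nat.cast_smul_eq_nsmul]
    calc g * ((v.toMul : ↥V) : G) * g⁻¹ = (((f g v).toMul : ↥V) : G) := (fapp g v).symm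
      _ = (((c.val • v).toMul : ↥V) : G) := by rw [h1]
      _ = ((v.toMul ^ c.val : ↥V) : G) := by rw [toMul_nsmul]
      _ = ((v.toMul : ↥V) : G) ^ c.val := by push_cast; rfl


universe u

lemma key_supersolvable {p : ℕ} (hp : p.Prime) (hmod : p % 4 = 1) :
    ∀ (n : ℕ) (G : Type u) (_ : Group G), Nat.card G = 4 * p ^ n → IsSupersolvable G := by
  intro n
  induction n with
  | zero =>
    intro G _ hG
    rw [pow_zero, mul_one] at hG
    haveI : Finite G := Nat.finite_of_card_ne_zero (by omega)
    haveI : Fact (Nat.Prime 2) := ⟨Nat.prime_two⟩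
    have hcomm : ∀ a b : G, a * b = b * a :=
      IsPGroup.commutative_of_card_eq_prime_sq (p := 2) (by rw [hG]; norm_num)
    obtain ⟨x, hx⟩ := exists_prime_orderOf_dvd_card' (G := G) 2 (by rw [hG]; norm_num)
    set N := Subgroup.zpowers x with hNdef
    haveI hNn : N.Normal := by
      constructor
      intro a ha g
      have h : g * a * g⁻¹ = a := by rw [hcomm g a, mul_assoc, mul_inv_cancel, mul_one]
      rwa [h]
    have hcardN : Nat.card N = 2 := by rw [Nat.card_zpowers, hx]
    have hq : Nat.card (G ⧸ N) = 2 := by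
      have h := Subgroup.card_eq_card_quotient_mul_card_subgroup (α := G) N
      rw [hG, hcardN] at h
      omega
    haveI : IsCyclic (G ⧸ N) := isCyclic_of_prime_card hq
    exact isSupersolvable_of_quotient G N x (Subgroup.zpowers_eq_closure x)
      (isSupersolvable_of_isCyclic _)
  | succ n IH =>
    intro G _ hG
    haveI : Finite G := Nat.finite_of_card_ne_zero
      (by rw [hG]; exact (Nat.mul_pos (by norm_num) (pow_pos hp.pos _)).ne')
    haveI hpf : Fact p.Prime := ⟨hp⟩
    haveI : NeZero p := ⟨hp.pos.ne'⟩
    have hp5 : 5 ≤ p := by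
      have := hp.two_le
      omega
    have hpdvd4 : ¬ p ∣ 4 := fun hd => by
      have := Nat.le_of_dvd (by norm_num) hd
      omega
    obtain ⟨P⟩ : Nonempty (Sylow p G) := inferInstance
    have hfact : (Nat.card G).factorization p = n + 1 := by
      rw [hG, Nat.factorization_mul (by norm_num) (pow_ne_zero _ hp.pos.ne'),
        Finsupp.add_apply, Nat.factorization_eq_zero_of_not_dvd hpdvd4,
        hp.factorization_pow, Finsupp.single_eq_same, zero_add]
    have hcardP : Nat.card (P : Subgroup G) = p ^ (n + 1) := by
      rw [P.card_eq_multiplicity, hfact]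
    have hindexP : (P : Subgroup G).index = 4 := by
      have h := Subgroup.card_mul_index (P : Subgroup G)
      rw [hcardP, hG] at h
      have hpn : 0 < p ^ (n + 1) := pow_pos hp.pos _
      have h2 : p ^ (n + 1) * (P : Subgroup G).index = p ^ (n+1) * 4 := by omega
      exact Nat.eq_of_mul_eq_mul_left hpn h2
    have hsy1 : Nat.card (Sylow p G) = 1 := by
      have hdvd : Nat.card (Sylow p G) ∣ 4 := hindexP ▸ P.card_dvd_index
      have hmod1 : Nat.card (Sylow p G) % p = 1 % p := card_sylow_modEq_one p G
      have hle : Nat.card (Sylow p G) ≤ 4 := Nat.le_of_dvd (by norm_num) hdvd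
      have hpos : 0 < Nat.card (Sylow p G) := Nat.card_pos
      have h1 : 1 % p = 1 := Nat.mod_eq_of_lt (by omega)
      have h2 : Nat.card (Sylow p G) % p = Nat.card (Sylow p G) := Nat.mod_eq_of_lt (by omega)
      omega
    haveI hPnormal : (P : Subgroup G).Normal := by
      rw [← Subgroup.normalizer_eq_top_iff, eq_top_iff]
      intro g _
      haveI hsub : Subsingleton (Sylow p G) := (Nat.card_eq_one_iff_unique.mp hsy1).1
      exact Sylow.smul_eq_iff_mem_normalizer.mp (Subsingleton.elim _ _)
    -- quotient of order 4 is commutative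
    have hcardQ : Nat.card (G ⧸ (P : Subgroup G)) = 4 := by
      rw [← Subgroup.index_eq_card, hindexP]
    haveI : Fact (Nat.Prime 2) := ⟨Nat.prime_two⟩
    have hQcomm : ∀ a b : G ⧸ (P : Subgroup G), a * b = b * a :=
      IsPGroup.commutative_of_card_eq_prime_sq (p := 2) (by rw [hcardQ]; norm_num)
    -- the subgroup V = Ω₁(Z(P))
    let V : Subgroup G :=
      { carrier := {x : G | x ∈ P ∧ x ^ p = 1 ∧ ∀ h ∈ (P : Subgroup G), h * x = x * h}
        one_mem' := ⟨Subgroup.one_mem _, one_pow p, fun h _ => by rw [mul_one, one_mul]⟩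
        mul_mem' := by
          rintro x y ⟨hxP, hxp, hxc⟩ ⟨hyP, hyp, hyc⟩
          refine ⟨Subgroup.mul_mem _ hxP hyP, ?_, ?_⟩
          · have hcxy : Commute x y := hyc x hxP
            rw [hcxy.mul_pow, hxp, hyp, mul_one]
          · intro h hh
            rw [← mul_assoc, hxc h hh, mul_assoc, hyc h hh, ← mul_assoc]
        inv_mem' := by
          rintro x ⟨hxP, hxp, hxc⟩
          refine ⟨Subgroup.inv_mem _ hxP, by rw [inv_pow, hxp, inv_one], ?_⟩
          intro h hh
          have hc : Commute h x := hxc h hh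
          exact hc.inv_right }
    have hVmem : ∀ x : G, x ∈ V ↔
        x ∈ P ∧ x ^ p = 1 ∧ ∀ h ∈ (P : Subgroup G), h * x = x * h := fun x => Iff.rfl
    haveI hVn : V.Normal := by
      constructor
      rintro x ⟨hxP, hxp, hxc⟩ g
      refine ⟨hPnormal.conj_mem x hxP g, ?_, ?_⟩
      · rw [conj_pow, hxp, mul_one, mul_inv_cancel]
      · intro h hh
        have hh' : g⁻¹ * h * g ∈ (P : Subgroup G) := by
          have := hPnormal.conj_mem h hh g⁻¹
          simpa using this
        have hx' : (g⁻¹ * h * g) * x = x * (g⁻¹ * h * g) := hxc _ hh'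
        have e1 : h * (g * x * g⁻¹) = g * ((g⁻¹ * h * g) * x) * g⁻¹ := by group
        have e2 : g * (x * (g⁻¹ * h * g)) * g⁻¹ = (g * x * g⁻¹) * h := by group
        rw [e1, hx', e2]
    -- V is nontrivial: central element of order p
    have hVnt : ∃ x ∈ V, x ≠ 1 := by
      haveI : Nontrivial (P : Subgroup G) := by
        rw [← Finite.one_lt_card_iff_nontrivial, hcardP]
        exact Nat.one_lt_pow (Nat.succ_ne_zero n) hp.one_lt
      haveI := IsPGroup.center_nontrivial (P.isPGroup')
      have hdvd : p ∣ Nat.card (Subgroup.center (P : Subgroup G)) := by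
        have h1 : Nat.card (Subgroup.center (P : Subgroup G)) ∣ p ^ (n + 1) := by
          rw [← hcardP]
          exact Subgroup.card_subgroup_dvd_card _
        have hgt : 1 < Nat.card (Subgroup.center (P : Subgroup G)) :=
          Finite.one_lt_card_iff_nontrivial.mpr inferInstance
        obtain ⟨m, hm, he⟩ := (Nat.dvd_prime_pow hp).mp h1
        rw [he]
        refine dvd_pow_self p ?_
        rintro rfl
        rw [pow_zero] at he
        omega
      obtain ⟨z, hz⟩ := exists_prime_orderOf_dvd_card' p hdvd
      set x₀ : G := ((z : (P : Subgroup G)) : G) with hx₀def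
      have horder : orderOf x₀ = p := by
        rw [← hz]
        calc orderOf x₀ = orderOf (z : (P : Subgroup G)) :=
              orderOf_injective ((P : Subgroup G)).subtype (Subgroup.subtype_injective _) _
          _ = orderOf z :=
              orderOf_injective (Subgroup.center (P : Subgroup G)).subtype
                (Subgroup.subtype_injective _) z
      refine ⟨x₀, ⟨(z : (P : Subgroup G)).2, ?_, ?_⟩, ?_⟩
      · rw [← horder]; exact pow_orderOf_eq_one x₀
      · intro h hh
        have hcen := Subgroup.mem_center_iff.mp z.2
        have := hcen ⟨h, hh⟩
        exact congrArg Subtype.val this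
      · intro h1
        rw [h1] at horder
        simp at horder
        omega
    -- action conditions
    have hact4 : ∀ g : G, ∀ x ∈ V, g ^ 4 * x * (g ^ 4)⁻¹ = x := by
      intro g x hx
      have hg4 : g ^ 4 ∈ (P : Subgroup G) := by
        rw [← QuotientGroup.eq_one_iff]
        have : ((g ^ 4 : G) : G ⧸ (P : Subgroup G)) = ((g : G ⧸ (P : Subgroup G))) ^ 4 := by
          rfl
        rw [this, ← hcardQ]
        exact pow_card_eq_one'
      rw [(hVmem x).mp hx |>.2.2 (g ^ 4) hg4, mul_assoc, mul_inv_cancel, mul_one]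
    have hactcomm : ∀ g h : G, ∀ x ∈ V,
        g * h * x * (g * h)⁻¹ = h * g * x * (h * g)⁻¹ := by
      intro g h x hx
      set k := (h * g)⁻¹ * (g * h) with hkdef
      have hkP : k ∈ (P : Subgroup G) := by
        rw [← QuotientGroup.eq_one_iff]
        have e : ((k : G) : G ⧸ (P : Subgroup G))
            = ((h * g : G) : G ⧸ (P : Subgroup G))⁻¹ * ((g * h : G) : G ⧸ (P : Subgroup G)) := by
          rw [hkdef]; rfl
        rw [e, inv_mul_eq_one]
        show ((h * g : G) : G ⧸ (P : Subgroup G)) = ((g * h : G) : G ⧸ (P : Subgroup G))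
        rw [QuotientGroup.mk_mul, QuotientGroup.mk_mul, hQcomm]
      have hcx : k * x = x * k := (hVmem x).mp hx |>.2.2 k hkP
      have e1 : g * h = (h * g) * k := by rw [hkdef]; group
      calc g * h * x * (g * h)⁻¹ = (h * g) * (k * x * k⁻¹) * (h * g)⁻¹ := by
            rw [e1]; group
        _ = (h * g) * x * (h * g)⁻¹ := by
            rw [hcx]; group
    obtain ⟨v, hvV, hv1, hvconj⟩ := exists_normal_generator hp hmod V
      (fun x y hx hy => ((hVmem y).mp hy).2.2 x ((hVmem x).mp hx).1)
      (fun x hx => ((hVmem x).mp hx).2.1) hVnt hact4 hactcomm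
    set N := Subgroup.zpowers v with hNdef
    haveI hNnormal : N.Normal := by
      constructor
      intro a ha g
      obtain ⟨k, hk⟩ := Subgroup.mem_zpowers_iff.mp ha
      obtain ⟨m, hm⟩ := hvconj g
      have e : g * a * g⁻¹ = (g * v * g⁻¹) ^ k := by rw [← hk, conj_zpow]
      rw [e, hm, ← zpow_natCast v m, ← zpow_mul]
      exact Subgroup.mem_zpowers_iff.mpr ⟨_, rfl⟩
    have hordv : orderOf v = p := orderOf_eq_prime ((hVmem v).mp hvV).2.1 hv1
    have hcardN : Nat.card N = p := by rw [hNdef, Nat.card_zpowers, hordv]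
    have hq : Nat.card (G ⧸ N) = 4 * p ^ n := by
      have h := Subgroup.card_eq_card_quotient_mul_card_subgroup (α := G) N
      rw [hG, hcardN] at h
      have e : 4 * p ^ (n+1) = (4 * p ^ n) * p := by ring
      rw [e] at h
      exact (Nat.eq_of_mul_eq_mul_right hp.pos h).symm
    exact isSupersolvable_of_quotient G N v (Subgroup.zpowers_eq_closure v)
      (IH (G ⧸ N) inferInstance hq)

/-- Let `p` be a prime with `p ≡ 1 (mod 4)` and `n ≥ 1`. Every group of order
`4 * p ^ n` is supersolvable. -/
theorem isSupersolvable_of_card_four_mul_prime_pow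
    (p : ℕ) (hp : p.Prime) (hmod : p % 4 = 1) (n : ℕ) (hn : 1 ≤ n)
    (G : Type*) [Group G] (hG : Nat.card G = 4 * p ^ n) :
    IsSupersolvable G :=
  key_supersolvable hp hmod n G inferInstance hG
end

section
/- Let G be a finite group and H a normal subgroup of G. If the quotient group G/H has a k-fold factorization of the form (a_1, ..., a_k), then for every position j with 0 ≤ j ≤ k the group G has a (k+1)-fold factorization of the form (a_1, ..., a_j, |H|, a_{j+1}, ..., a_k), i.e., with |H| inserted in any position among the a_i. -/
open Pointwise

theorem List.ofFn_insertNth {α : Type*} {k : ℕ} (j : Fin (k + 1)) (x : α) (f : Fin k → α) :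
    List.ofFn (j.insertNth x f) = (List.ofFn f).insertIdx j x := by
  refine List.ext_getElem (by simp [List.length_insertIdx_of_le_length, j.is_le]) fun n _ _ => ?_
  rw [List.getElem_ofFn]
  rcases lt_trichotomy n j with hn | rfl | hn
  · rw [List.getElem_insertIdx_of_lt hn, List.getElem_ofFn, Fin.insertNth_apply_below hn]
    simp only [eq_rec_constant]; rfl
  · rw [List.getElem_insertIdx_self]
    exact Fin.insertNth_apply_same _ _ _
  · rw [List.getElem_insertIdx_of_gt hn, List.getElem_ofFn, Fin.insertNth_apply_above hn]
    simp only [eq_rec_constant]; rfl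

theorem List.prod_ofFn_insertNth {M : Type*} [Monoid M] {k : ℕ} (j : Fin (k + 1)) {x : M}
    {f : Fin k → M} (hx : ∀ i, Commute x (f i)) :
    (List.ofFn (j.insertNth x f)).prod = x * (List.ofFn f).prod := by
  rw [List.ofFn_insertNth, List.prod_insertIdx (by simpa using j.is_le)]
  intro y hy
  obtain ⟨i, rfl⟩ := List.mem_ofFn.mp (List.mem_of_mem_take hy)
  exact hx i

theorem Subgroup.mul_coe_eq_univ_of_image_mk_eq_univ {G : Type*} [Group G] (H : Subgroup G)
    {S : Set G} (hS : ((↑) : G → G ⧸ H) '' S = Set.univ) : S * (H : Set G) = Set.univ := by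
  refine Set.eq_univ_of_forall fun g => ?_
  obtain ⟨s, hs, hsg⟩ := hS.symm ▸ Set.mem_univ (g : G ⧸ H)
  exact ⟨s, hs, s⁻¹ * g, QuotientGroup.eq.mp hsg, mul_inv_cancel_left s g⟩

theorem QuotientGroup.image_mk_prod_ofFn_image_out {G : Type*} [Group G] (H : Subgroup G)
    [H.Normal] {k : ℕ} (A : Fin k → Set (G ⧸ H)) :
    ((↑) : G → G ⧸ H) '' (List.ofFn fun i => Quotient.out '' A i).prod = (List.ofFn A).prod := by
  rw [← QuotientGroup.coe_mk', Set.image_list_prod, List.map_ofFn]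
  congr 2 with i : 1
  exact Function.LeftInverse.image_image QuotientGroup.out_eq' (A i)

theorem hasFactorization_of_quotient_general (G : Type*) [Group G]
    (H : Subgroup G) [H.Normal] {k : ℕ} (a : Fin k → ℕ)
    (h : HasFactorization (G ⧸ H) a) (j : Fin (k + 1)) :
    HasFactorization G (j.insertNth (Nat.card H) a) := by
  obtain ⟨A, hcard, hG, hprod⟩ := h
  set B : Fin k → Set G := fun i => Quotient.out '' A i
  have hcomm (S : Set G) : Commute (H : Set G) S := (Subgroup.set_mul_normal_comm S H).symm
  refine ⟨j.insertNth (H : Set G) B, (Fin.forall_iff_succAbove j).mpr ⟨?_, fun i => ?_⟩, ?_, ?_⟩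
  · simp
  · simpa [B, Nat.card_image_of_injective Quotient.out_injective] using hcard i
  · rw [Fin.prod_insertNth, ← hG, Subgroup.card_eq_card_quotient_mul_card_subgroup H, mul_comm]
  · rw [List.prod_ofFn_insertNth j fun i => hcomm (B i), (hcomm _).eq]
    exact H.mul_coe_eq_univ_of_image_mk_eq_univ <| by
      rw [QuotientGroup.image_mk_prod_ofFn_image_out, hprod]

/-- Let `G` be a finite group and `H` a normal subgroup of `G`. If the quotient
`G ⧸ H` has a `k`-fold factorization of the form `(a 1, …, a k)`, then for every
position `j` the group `G` has a `(k+1)`-fold factorization obtained by inserting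
`|H|` at position `j` among the `a i`. -/
theorem hasFactorization_of_quotient (G : Type*) [Group G] [Finite G]
    (H : Subgroup G) [H.Normal] {k : ℕ} (a : Fin k → ℕ)
    (h : HasFactorization (G ⧸ H) a) (j : Fin (k + 1)) :
    HasFactorization G (j.insertNth (Nat.card H) a) :=
  hasFactorization_of_quotient_general G H a h j
end

section
/- Let G be a finite group and H a normal subgroup of G of prime order p. If the quotient group G/H is multifold-factorizable, then G is multifold-factorizable. -/
open Pointwise

private lemma list_ofFn_insertNth_one_prod {M : Type*} [Monoid M] :
    ∀ {m : ℕ} (j : Fin (m + 1)) (f : Fin m → M),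
      (List.ofFn (j.insertNth (1 : M) f)).prod = (List.ofFn f).prod := by
  intro m
  induction m with
  | zero =>
    intro j f
    rw [Fin.fin_one_eq_zero j]
    simp [Fin.insertNth_zero']
  | succ n ih =>
    intro j f
    induction j using Fin.cases with
    | zero =>
      simp [Fin.insertNth_zero', List.ofFn_succ]
    | succ i =>
      have h0 : Fin.insertNth (α := fun _ => M) i.succ 1 f 0 = f 0 := by
        rw [← Fin.succ_succAbove_zero i, Fin.insertNth_apply_succAbove]
      have hs : (fun l : Fin (n + 1) => Fin.insertNth (α := fun _ => M) i.succ 1 f l.succ)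
          = Fin.insertNth (α := fun _ => M) i 1 (fun l => f l.succ) := by
        funext l
        by_cases hl : l = i
        · subst hl
          rw [Fin.insertNth_apply_same, Fin.insertNth_apply_same]
        · obtain ⟨z, rfl⟩ := Fin.exists_succAbove_eq (Ne.symm (Ne.symm hl))
          rw [Fin.insertNth_apply_succAbove, ← Fin.succ_succAbove_succ,
            Fin.insertNth_apply_succAbove]
      rw [List.ofFn_succ, List.ofFn_succ (f := f), List.prod_cons, List.prod_cons, h0, hs, ih]

/-- Multifold-factorizable groups admit factorizations for any sizes `≥ 1` (allowing 1's),
for any number of factors `≥ 1`. -/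
private lemma weak_factorization (Q : Type*) [Group Q] [Finite Q]
    (h : IsMultifoldFactorizable Q) :
    ∀ (k : ℕ), 1 ≤ k → ∀ b : Fin k → ℕ, (∀ i, 1 ≤ b i) →
      Nat.card Q = ∏ i, b i → HasFactorization Q b := by
  intro k
  induction k with
  | zero => omega
  | succ m ih =>
    intro _ b hb hcard
    rcases Nat.eq_zero_or_pos m with hm | hm
    · subst hm
      refine ⟨fun _ => Set.univ, ?_, hcard, ?_⟩
      · intro i
        rw [Fin.fin_one_eq_zero i]
        show Nat.card (Set.univ : Set Q) = b 0
        rw [Nat.card_coe_set_eq, Set.ncard_univ, hcard, Fin.prod_univ_one]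
      · simp
    · by_cases hall : ∀ i, 1 < b i
      · exact h (m + 1) (by omega) b hall hcard
      · push_neg at hall
        obtain ⟨j, hj⟩ := hall
        have hbj : b j = 1 := le_antisymm hj (hb j)
        have hprod : Nat.card Q = ∏ i : Fin m, b (j.succAbove i) := by
          rw [hcard, Fin.prod_univ_succAbove b j, hbj, one_mul]
        obtain ⟨B', hB'card, -, hB'prod⟩ :=
          ih hm (fun i => b (j.succAbove i)) (fun i => hb _) hprod
        refine ⟨j.insertNth (1 : Set Q) B', ?_, hcard, ?_⟩
        · intro i
          by_cases hij : i = j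
          · subst hij
            rw [Fin.insertNth_apply_same, hbj]
            show Nat.card ↥({1} : Set Q) = 1
            rw [Nat.card_coe_set_eq, Set.ncard_singleton]
          · obtain ⟨z, rfl⟩ := Fin.exists_succAbove_eq hij
            rw [Fin.insertNth_apply_succAbove]
            exact hB'card z
        · rw [list_ofFn_insertNth_one_prod, hB'prod]

/-- Let `G` be a finite group and `H` a normal subgroup of `G` of prime order `p`.
If the quotient group `G ⧸ H` is multifold-factorizable, then `G` is
multifold-factorizable. -/
theorem isMultifoldFactorizable_of_quotient_by_prime_order
    (G : Type*) [Group G] [Finite G] (H : Subgroup G) [H.Normal]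
    (p : ℕ) (hp : p.Prime) (hH : Nat.card H = p)
    (h : IsMultifoldFactorizable (G ⧸ H)) :
    IsMultifoldFactorizable G := by
  classical
  intro k hk a ha hcard
  have hN : H.Normal := inferInstance
  have hppos : 0 < p := hp.pos
  have hGH : Nat.card G = Nat.card (G ⧸ H) * p := by
    rw [← hH]; exact Subgroup.card_eq_card_quotient_mul_card_subgroup H
  have hpdvd : p ∣ ∏ i, a i := by
    rw [← hcard, hGH]; exact dvd_mul_left p _
  obtain ⟨j, -, hpj⟩ := hp.prime.exists_mem_finset_dvd hpdvd
  set b : Fin k → ℕ := Function.update a j (a j / p) with hbdef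
  have hbj : b j = a j / p := Function.update_self j _ a
  have hbne : ∀ i, i ≠ j → b i = a i := fun i hi => Function.update_of_ne hi _ a
  have haj : p * (a j / p) = a j := Nat.mul_div_cancel' hpj
  have hprodb : p * ∏ i, b i = ∏ i, a i := by
    rw [hbdef, Finset.prod_update_of_mem (Finset.mem_univ j), ← mul_assoc, haj, ← Finset.erase_eq,
      Finset.mul_prod_erase Finset.univ a (Finset.mem_univ j)]
  have hq : Nat.card (G ⧸ H) = ∏ i, b i := by
    have h2 : p * ∏ i, b i = p * Nat.card (G ⧸ H) := by
      rw [hprodb, ← hcard, hGH, mul_comm]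
    exact (Nat.eq_of_mul_eq_mul_left hppos h2).symm
  have hb1 : ∀ i, 1 ≤ b i := by
    intro i
    by_cases hi : i = j
    · subst hi
      rw [hbj, Nat.le_div_iff_mul_le hppos, one_mul]
      exact Nat.le_of_dvd (by have := ha i; omega) hpj
    · rw [hbne i hi]; exact le_of_lt (ha i)
  obtain ⟨B, hBcard, -, hBprod⟩ := weak_factorization (G ⧸ H) h k (by omega) b hb1 hq
  -- a section of the quotient map
  set s : G ⧸ H → G := Quotient.out with hsdef
  have hsec : ∀ q : G ⧸ H, QuotientGroup.mk (s q) = q := fun q => Quotient.out_eq' q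
  have hsinj : Function.Injective s := Function.LeftInverse.injective hsec
  -- `H` commutes with every subset of `G`
  have Hcomm : ∀ X : Set G, (H : Set G) * X = X * (H : Set G) := by
    intro X; ext y
    simp only [Set.mem_mul, SetLike.mem_coe]
    constructor
    · rintro ⟨z, hz, x, hx, rfl⟩
      exact ⟨x, hx, x⁻¹ * z * x, by simpa using hN.conj_mem z hz x⁻¹, by group⟩
    · rintro ⟨x, hx, z, hz, rfl⟩
      exact ⟨x * z * x⁻¹, hN.conj_mem z hz x, x, hx, by group⟩
  -- multiplying by `H` gives the preimage of the image in the quotient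
  have hmulH : ∀ X : Set G, X * (H : Set G)
      = QuotientGroup.mk ⁻¹' (QuotientGroup.mk '' X : Set (G ⧸ H)) := by
    intro X; ext y
    simp only [Set.mem_mul, SetLike.mem_coe, Set.mem_preimage, Set.mem_image]
    constructor
    · rintro ⟨x, hx, z, hz, rfl⟩
      exact ⟨x, hx, (QuotientGroup.mk_mul_of_mem x hz).symm⟩
    · rintro ⟨x, hx, hxy⟩
      refine ⟨x, hx, x⁻¹ * y, ?_, by group⟩
      exact QuotientGroup.eq.mp hxy
  -- the image map as a monoid homomorphism on sets
  let φ : Set G →* Set (G ⧸ H) :=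
    { toFun := fun X => QuotientGroup.mk '' X
      map_one' := by ext x; simp [Set.image_one, Set.mem_one]
      map_mul' := fun X Y => by
        simpa [QuotientGroup.coe_mk'] using
          Set.image_mul (QuotientGroup.mk' H) (s := X) (t := Y) }
  set A : Fin k → Set G :=
    (fun i => if i = j then s '' B j * (H : Set G) else s '' B i) with hAdef
  refine ⟨A, ?_, hcard, ?_⟩
  · intro i
    by_cases hi : i = j
    · subst hi
      have hAi : A i = s '' B i * (H : Set G) := by rw [hAdef]; simp
      rw [hAi]
      let e : B i × H → G := fun x => s x.1 * (x.2 : G)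
      have hrange : Set.range e = s '' B i * (H : Set G) := by
        ext y
        simp only [Set.mem_range, Set.mem_mul, SetLike.mem_coe, Set.mem_image]
        constructor
        · rintro ⟨⟨⟨q, hq⟩, ⟨z, hz⟩⟩, rfl⟩
          exact ⟨s q, ⟨q, hq, rfl⟩, z, hz, rfl⟩
        · rintro ⟨x, ⟨q, hq, rfl⟩, z, hz, rfl⟩
          exact ⟨⟨⟨q, hq⟩, ⟨z, hz⟩⟩, rfl⟩
      have heinj : Function.Injective e := by
        rintro ⟨⟨q, hq⟩, ⟨z, hz⟩⟩ ⟨⟨q', hq'⟩, ⟨z', hz'⟩⟩ hqz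
        simp only [e] at hqz
        have h1 : ((s q * z : G) : G ⧸ H) = ((s q' * z' : G) : G ⧸ H) := by rw [hqz]
        rw [QuotientGroup.mk_mul_of_mem (s q) hz, QuotientGroup.mk_mul_of_mem (s q') hz',
          hsec, hsec] at h1
        subst h1
        have h2 : z = z' := mul_left_cancel hqz
        simp [h2]
      have hcr : Nat.card ↥(s '' B i * (H : Set G)) = Nat.card (↥(B i) × ↥H) := by
        rw [← hrange, Nat.card_range_of_injective heinj]
      rw [hcr, Nat.card_prod, hBcard i, hH, hbj, Nat.div_mul_cancel hpj]
    · have hAi : A i = s '' B i := by rw [hAdef]; simp [hi]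
      rw [hAi, Nat.card_image_of_injective hsinj, hBcard i, hbne i hi]
  · have hjk : (j : ℕ) < k := j.isLt
    set L : List (Set G) := List.ofFn (fun i => s '' B i) with hLdef
    have hlen : L.length = k := by simp [hLdef]
    have hofA : List.ofFn A = L.set j (s '' B j * (H : Set G)) := by
      apply List.ext_getElem
      · simp [hLdef]
      · intro n h1 h2
        simp only [hLdef, List.getElem_set, List.getElem_ofFn, hAdef]
        by_cases hn : (j : ℕ) = n
        · rw [if_pos hn, if_pos (Fin.ext hn.symm)]
        · rw [if_neg hn, if_neg (fun hh => hn ((congrArg Fin.val hh).symm))]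
    have hprodA : (List.ofFn A).prod
        = ((L.take j).prod * (s '' B j * (H : Set G))) * (L.drop ((j : ℕ) + 1)).prod := by
      rw [hofA, List.prod_set, if_pos (show (j : ℕ) < L.length by omega)]
    have hLget : L[(j : ℕ)]'(by omega) = s '' B j := by
      simp [hLdef]
    have hLsplit : L.prod = ((L.take j).prod * (s '' B j)) * (L.drop ((j : ℕ) + 1)).prod := by
      conv_lhs => rw [← List.prod_take_mul_prod_drop L j]
      rw [List.drop_eq_getElem_cons (by omega), List.prod_cons, hLget, ← mul_assoc]
    have himg : (QuotientGroup.mk '' L.prod : Set (G ⧸ H)) = Set.univ := by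
      have h1 : (QuotientGroup.mk '' L.prod : Set (G ⧸ H)) = φ L.prod := rfl
      have h2 : ∀ i : Fin k, φ (s '' B i) = B i := by
        intro i
        show QuotientGroup.mk '' (s '' B i) = B i
        rw [Set.image_image]
        simp [hsec]
      rw [h1, hLdef, map_list_prod φ, List.map_ofFn]
      have h3 : (φ ∘ fun i => s '' B i) = B := by
        funext i; exact h2 i
      rw [h3, hBprod]
    calc (List.ofFn A).prod
        = (L.take j).prod * (s '' B j) * ((H : Set G) * (L.drop ((j : ℕ) + 1)).prod) := by
          rw [hprodA]; simp only [mul_assoc]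
      _ = (L.take j).prod * (s '' B j) * ((L.drop ((j : ℕ) + 1)).prod * (H : Set G)) := by
          rw [Hcomm]
      _ = L.prod * (H : Set G) := by rw [hLsplit]; simp only [mul_assoc]
      _ = QuotientGroup.mk ⁻¹' (QuotientGroup.mk '' L.prod : Set (G ⧸ H)) := hmulH _
      _ = Set.univ := by rw [himg, Set.preimage_univ]
end

section
/- Every group of order 24 is multifold-factorizable. -/
/-!
If `H ≤ G` and `H = A₁ ⋯ Aₖ`, then `G = T A₁ ⋯ Aₖ = A₁ ⋯ Aₖ T'` for a left transversal `T` and a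
right transversal `T'` of `H`; if `N` is normal, lifts of a factorization of `G ⧸ N` together with
`N`, placed at either end, factor `G`. A finite `p`-group has subgroups of every order dividing its
own, so it has every factorization of its order; hence every finite group has the factorizations
`(c, a₁, …, aₖ)` and `(a₁, …, aₖ, c)` whenever `a₁ ⋯ aₖ` is a power of a prime.

For `|G| = 24` exactly one factor `c` is divisible by `3`, and the factors on either side of it
multiply to powers of `2`. This settles every case except `c` in the interior. Then a factor `2`
stands at one end, and the other factors, among which `c` is now at an end, factor by the above
either a subgroup of index `2` or the quotient by a normal subgroup of order `2`. One of these
exists: if the Sylow `3`-subgroup is normal, pull back a subgroup of order `4` of the quotient;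
otherwise `G` acts on its four Sylow `3`-subgroups with a kernel of order `1` (so `G ≅ S₄` contains
`A₄`) or `2`, since an element of order `3` acting trivially lies in every Sylow `3`-subgroup.
-/

open Pointwise

universe u

section Factorization

variable {G : Type*} [Group G] {l : List ℕ}

/-- The list form of `HasFactorization`, in which factors are easily prepended and appended. -/
def HasListFactorization (G : Type*) [Group G] (l : List ℕ) : Prop :=
  ∃ A : List (Set G), A.map (fun s : Set G => Nat.card s) = l ∧ Nat.card G = l.prod ∧
    A.prod = Set.univ

lemma Subgroup.index_eq_of_mul_card_eq [Finite G] {H : Subgroup G} {a : ℕ}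
    (h : a * Nat.card H = Nat.card G) : H.index = a :=
  Nat.eq_of_mul_eq_mul_left Nat.card_pos (H.card_mul_index.trans (h.symm.trans (mul_comm _ _)))

namespace HasListFactorization

lemma nil (h : Nat.card G = 1) : HasListFactorization G [] := by
  have : Subsingleton G := (Nat.card_eq_one_iff_unique.mp h).1
  exact ⟨[], rfl, h, Set.eq_univ_of_forall fun g => Set.mem_one.mpr (Subsingleton.elim g 1)⟩

lemma cons_index (H : Subgroup G) (h : HasListFactorization H l) :
    HasListFactorization G (H.index :: l) := by
  obtain ⟨A, hA, hcard, hprod⟩ := h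
  obtain ⟨S, hS, -⟩ := H.exists_isComplement_left 1
  refine ⟨S :: A.map (H.subtype '' ·), ?_, ?_, ?_⟩
  · rw [List.map_cons, List.map_map, hS.card_left, ← hA]
    congr 1
    exact List.map_congr_left fun s _ => Nat.card_image_of_injective H.subtype_injective s
  · rw [List.prod_cons, ← hcard, ← H.card_mul_index, mul_comm]
  · rw [List.prod_cons, ← Set.image_list_prod, hprod, Set.image_univ, H.coe_subtype,
      Subtype.range_coe, hS.mul_eq]

lemma append_index (H : Subgroup G) (h : HasListFactorization H l) :
    HasListFactorization G (l ++ [H.index]) := by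
  obtain ⟨A, hA, hcard, hprod⟩ := h
  obtain ⟨T, hT, -⟩ := H.exists_isComplement_right 1
  refine ⟨A.map (H.subtype '' ·) ++ [T], ?_, ?_, ?_⟩
  · rw [List.map_append, List.map_map, List.map_singleton, hT.card_right, ← hA]
    congr 1
    exact List.map_congr_left fun s _ => Nat.card_image_of_injective H.subtype_injective s
  · rw [List.prod_append, List.prod_singleton, ← hcard, H.card_mul_index]
  · rw [List.prod_append, List.prod_singleton, ← Set.image_list_prod, hprod, Set.image_univ,
      H.coe_subtype, Subtype.range_coe, hT.mul_eq]

lemma exists_lift (N : Subgroup G) [N.Normal] (h : HasListFactorization (G ⧸ N) l) :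
    ∃ B : List (Set G), B.map (fun s : Set G => Nat.card s) = l ∧
      B.prod * (N : Set G) = Set.univ := by
  obtain ⟨A, hA, -, hprod⟩ := h
  refine ⟨A.map (Quotient.out '' ·), ?_, ?_⟩
  · rw [List.map_map, ← hA]
    exact List.map_congr_left fun s _ => Nat.card_image_of_injective Quotient.out_injective s
  · have hmk : (A.map (Quotient.out '' ·)).map ((QuotientGroup.mk' N : G → G ⧸ N) '' ·) = A := by
      rw [List.map_map]
      refine List.map_id'' (fun s => ?_) A
      simp only [Function.comp_apply, Set.image_image, QuotientGroup.coe_mk',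
        QuotientGroup.out_eq', Set.image_id']
    rw [← QuotientGroup.preimage_image_mk_eq_mul, ← QuotientGroup.coe_mk', Set.image_list_prod,
      hmk, hprod, Set.preimage_univ]

lemma cons_card_of_normal (N : Subgroup G) [N.Normal] (h : HasListFactorization (G ⧸ N) l) :
    HasListFactorization G (Nat.card N :: l) := by
  obtain ⟨B, hB, hprod⟩ := h.exists_lift N
  obtain ⟨-, -, hcard, -⟩ := h
  refine ⟨(N : Set G) :: B, by rw [List.map_cons, hB]; rfl, ?_, ?_⟩
  · rw [List.prod_cons, ← hcard, N.card_eq_card_quotient_mul_card_subgroup, mul_comm]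
  · rw [List.prod_cons, ← Subgroup.set_mul_normal_comm, hprod]

lemma append_card_of_normal (N : Subgroup G) [N.Normal] (h : HasListFactorization (G ⧸ N) l) :
    HasListFactorization G (l ++ [Nat.card N]) := by
  obtain ⟨B, hB, hprod⟩ := h.exists_lift N
  obtain ⟨-, -, hcard, -⟩ := h
  refine ⟨B ++ [(N : Set G)], by rw [List.map_append, hB, List.map_singleton]; rfl, ?_, ?_⟩
  · rw [List.prod_append, List.prod_singleton, ← hcard, N.card_eq_card_quotient_mul_card_subgroup]
  · rw [List.prod_append, List.prod_singleton, hprod]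

lemma hasFactorization {k : ℕ} {a : Fin k → ℕ} (h : HasListFactorization G (List.ofFn a)) :
    HasFactorization G a := by
  obtain ⟨A, hA, hcard, hprod⟩ := h
  have hlen : A.length = k := by simpa using congrArg List.length hA
  subst hlen
  refine ⟨A.get, fun i => ?_, by rwa [List.prod_ofFn] at hcard, by rwa [List.ofFn_get]⟩
  simpa using congrArg (·[i]?) hA

end HasListFactorization

theorem IsPGroup.hasListFactorization [Finite G] {p : ℕ} [Fact p.Prime] (hG : IsPGroup p G)
    (hl : Nat.card G = l.prod) : HasListFactorization G l := by
  induction l generalizing G with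
  | nil => exact .nil hl
  | cons a t ih =>
    obtain ⟨n, hn⟩ := IsPGroup.iff_card.mp hG
    have hdvd : t.prod ∣ Nat.card G := hl ▸ Dvd.intro_left a rfl
    obtain ⟨k, -, hk⟩ := (Nat.dvd_prime_pow Fact.out).mp (hn ▸ hdvd)
    obtain ⟨H, hH⟩ := Sylow.exists_subgroup_card_pow_prime p (n := k) (hk ▸ hdvd)
    have hHt : Nat.card H = t.prod := hH.trans hk.symm
    have := (ih (hG.to_subgroup H) hHt).cons_index H
    rwa [Subgroup.index_eq_of_mul_card_eq (by rw [hHt, hl, List.prod_cons])] at this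

namespace HasListFactorization

variable [Finite G] {p n c : ℕ}

lemma cons_of_prod_dvd_prime_pow (hp : p.Prime) (hl : l.prod ∣ p ^ n)
    (hc : c * l.prod = Nat.card G) : HasListFactorization G (c :: l) := by
  have := Fact.mk hp
  obtain ⟨k, -, hk⟩ := (Nat.dvd_prime_pow hp).mp hl
  obtain ⟨H, hH⟩ := Sylow.exists_subgroup_card_pow_prime p (n := k) (hk ▸ hc ▸ Dvd.intro_left c rfl)
  have hHl : Nat.card H = l.prod := hH.trans hk.symm
  have := ((IsPGroup.of_card hH).hasListFactorization hHl).cons_index H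
  rwa [Subgroup.index_eq_of_mul_card_eq (hHl ▸ hc)] at this

lemma append_of_prod_dvd_prime_pow (hp : p.Prime) (hl : l.prod ∣ p ^ n)
    (hc : l.prod * c = Nat.card G) : HasListFactorization G (l ++ [c]) := by
  have := Fact.mk hp
  obtain ⟨k, -, hk⟩ := (Nat.dvd_prime_pow hp).mp hl
  obtain ⟨H, hH⟩ := Sylow.exists_subgroup_card_pow_prime p (n := k) (hk ▸ hc ▸ Dvd.intro c rfl)
  have hHl : Nat.card H = l.prod := hH.trans hk.symm
  have := ((IsPGroup.of_card hH).hasListFactorization hHl).append_index H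
  rwa [Subgroup.index_eq_of_mul_card_eq (by rw [hHl, mul_comm, hc])] at this

end HasListFactorization

end Factorization

lemma HasListFactorization.cons_two_and_append_two {G : Type u} [Group G] [Finite G]
    (hG : (∃ H : Subgroup G, H.index = 2) ∨ ∃ N : Subgroup G, N.Normal ∧ Nat.card N = 2)
    {l : List ℕ} (hl : ∀ (Q : Type u) [Group Q] [Finite Q], 2 * Nat.card Q = Nat.card G →
      HasListFactorization Q l) :
    HasListFactorization G (2 :: l) ∧ HasListFactorization G (l ++ [2]) := by
  rcases hG with ⟨H, hH⟩ | ⟨N, hN, hN2⟩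
  · have hQ := hl H (by rw [← hH, mul_comm, H.card_mul_index])
    exact ⟨hH ▸ hQ.cons_index H, hH ▸ hQ.append_index H⟩
  · have hQ := hl (G ⧸ N) (by rw [← hN2, mul_comm, ← N.card_eq_card_quotient_mul_card_subgroup])
    exact ⟨hN2 ▸ hQ.cons_card_of_normal N, hN2 ▸ hQ.append_card_of_normal N⟩

lemma List.eq_nil_of_one_lt_of_prod_eq_one {l : List ℕ} (hl : ∀ x ∈ l, 1 < x)
    (h : l.prod = 1) : l = [] := by
  cases l with
  | nil => rfl
  | cons a t =>
    have := hl a List.mem_cons_self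
    rw [List.prod_cons, mul_eq_one] at h
    omega

lemma List.eq_singleton_of_one_lt_of_prod_prime {l : List ℕ} (hl : ∀ x ∈ l, 1 < x)
    (h : l.prod.Prime) : l = [l.prod] := by
  cases l with
  | nil => exact absurd h Nat.not_prime_one
  | cons a t =>
    rw [List.prod_cons] at h ⊢
    rcases Nat.prime_mul_iff.mp h with ⟨-, ht⟩ | ⟨-, ha⟩
    · rw [ht, mul_one, List.eq_nil_of_one_lt_of_prod_eq_one
        (fun x hx => hl x (List.mem_cons_of_mem a hx)) ht]
    · exact absurd ha (hl a List.mem_cons_self).ne'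

lemma eq_one_or_two_of_mul_mul_eq_eight {a d b : ℕ} (h : a * d * b = 2 ^ 3) :
    a = 1 ∨ a = 2 ∨ b = 1 ∨ b = 2 := by
  have ha : a ≠ 0 := by rintro rfl; simp at h
  have hb : b ≠ 0 := by rintro rfl; simp at h
  have hd : d ≠ 0 := by rintro rfl; simp at h
  by_contra! h'
  have := Nat.mul_le_mul (Nat.mul_le_mul (show 3 ≤ a by omega) (show 1 ≤ d by omega))
    (show 3 ≤ b by omega)
  linarith

theorem IsPGroup.le_sylow_of_le_ker {G : Type*} [Group G] {p : ℕ} {T : Subgroup G}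
    (hT : IsPGroup p T) (hK : T ≤ (MulAction.toPermHom G (Sylow p G)).ker) (Q : Sylow p G) :
    T ≤ Q :=
  hT.sylow_mem_fixedPoints_iff.mp fun t => congr($(hK t.2) Q)

section CardEq24

variable {G : Type*} [Group G]

lemma card_sylow_three_eq_three (hG : Nat.card G = 24) (P : Sylow 3 G) : Nat.card P = 3 := by
  have : Finite G := Nat.finite_of_card_ne_zero (by omega)
  rw [P.card_eq_multiplicity, hG, Nat.factorization_def _ Nat.prime_three,
    show (24 : ℕ) = 3 * 8 by rfl, padicValNat.mul (by norm_num) (by norm_num), padicValNat_self,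
    padicValNat.eq_zero_of_not_dvd (by norm_num), add_zero, pow_one]

lemma card_sylow_three_eq_one_or_four (hG : Nat.card G = 24) :
    Nat.card (Sylow 3 G) = 1 ∨ Nat.card (Sylow 3 G) = 4 := by
  have : Finite G := Nat.finite_of_card_ne_zero (by omega)
  obtain ⟨P⟩ : Nonempty (Sylow 3 G) := inferInstance
  have hdvd : Nat.card (Sylow 3 G) ∣ 24 :=
    hG ▸ P.card_eq_index_normalizer ▸ Subgroup.index_dvd_card _
  have hmod : Nat.card (Sylow 3 G) % 3 = 1 := card_sylow_modEq_one 3 G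
  have hle : Nat.card (Sylow 3 G) ≤ 24 := Nat.le_of_dvd (by norm_num) hdvd
  interval_cases h : Nat.card (Sylow 3 G) <;> omega

lemma exists_index_eq_two_of_card_sylow_three_eq_one (hG : Nat.card G = 24)
    (h1 : Nat.card (Sylow 3 G) = 1) : ∃ H : Subgroup G, H.index = 2 := by
  have : Finite G := Nat.finite_of_card_ne_zero (by omega)
  obtain ⟨P⟩ : Nonempty (Sylow 3 G) := inferInstance
  have : Subsingleton (Sylow 3 G) := (Nat.card_eq_one_iff_unique.mp h1).1
  have := P.normal_of_subsingleton
  have hQ : Nat.card (G ⧸ (P : Subgroup G)) = 2 ^ 3 := by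
    have := (P : Subgroup G).card_eq_card_quotient_mul_card_subgroup
    rw [hG, card_sylow_three_eq_three hG P] at this
    omega
  obtain ⟨H, hH⟩ := Sylow.exists_subgroup_card_pow_prime (G := G ⧸ (P : Subgroup G)) 2 (n := 2)
    (by rw [hQ]; exact pow_dvd_pow 2 (by norm_num))
  refine ⟨H.comap (QuotientGroup.mk' _), ?_⟩
  rw [H.index_comap_of_surjective (QuotientGroup.mk'_surjective _)]
  exact Subgroup.index_eq_of_mul_card_eq (by rw [hH, hQ]; rfl)

lemma card_ker_toPermHom_sylow_three_eq_one_or_two (hG : Nat.card G = 24)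
    (h4 : Nat.card (Sylow 3 G) = 4) :
    Nat.card (MulAction.toPermHom G (Sylow 3 G)).ker = 1 ∨
      Nat.card (MulAction.toPermHom G (Sylow 3 G)).ker = 2 := by
  have : Finite G := Nat.finite_of_card_ne_zero (by omega)
  set K := (MulAction.toPermHom G (Sylow 3 G)).ker
  obtain ⟨P⟩ : Nonempty (Sylow 3 G) := inferInstance
  have hKP : K ≤ Subgroup.normalizer (P : Set G) := fun g hg =>
    P.stabilizer_eq_normalizer ▸ congr($hg P)
  have hN : Nat.card (Subgroup.normalizer (P : Set G)) = 6 := by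
    have := (Subgroup.normalizer (P : Set G)).card_mul_index
    rw [← P.card_eq_index_normalizer, h4, hG] at this
    omega
  have hdvd : Nat.card K ∣ 6 := hN ▸ Subgroup.card_dvd_of_le hKP
  have h3 : ¬ 3 ∣ Nat.card K := by
    intro h3
    obtain ⟨g, hg⟩ := exists_prime_orderOf_dvd_card' (G := K) 3 h3
    have hT : Nat.card (Subgroup.zpowers (g : G)) = 3 ^ 1 := by
      rw [Nat.card_zpowers, Subgroup.orderOf_coe, hg, pow_one]
    have hTQ (Q : Sylow 3 G) : Subgroup.zpowers (g : G) = Q :=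
      Subgroup.eq_of_le_of_card_ge
        ((IsPGroup.of_card hT).le_sylow_of_le_ker (Subgroup.zpowers_le.mpr g.2) Q)
        (by rw [hT, card_sylow_three_eq_three hG Q, pow_one])
    have : Subsingleton (Sylow 3 G) := ⟨fun Q R => Sylow.ext ((hTQ Q).symm.trans (hTQ R))⟩
    have := Finite.card_le_one_iff_subsingleton.mpr this
    omega
  have : Nat.card K ≤ 6 := Nat.le_of_dvd (by norm_num) hdvd
  interval_cases h : Nat.card K <;> omega

lemma exists_index_eq_two_of_ker_toPermHom_eq_bot (hG : Nat.card G = 24)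
    (h4 : Nat.card (Sylow 3 G) = 4) (hK : (MulAction.toPermHom G (Sylow 3 G)).ker = ⊥) :
    ∃ H : Subgroup G, H.index = 2 := by
  classical
  have : Finite G := Nat.finite_of_card_ne_zero (by omega)
  have : Fintype (Sylow 3 G) := Fintype.ofFinite _
  have : Nontrivial (Sylow 3 G) := Finite.one_lt_card_iff_nontrivial.mp (by omega)
  have hsurj : Function.Surjective (MulAction.toPermHom G (Sylow 3 G)) :=
    ((Nat.bijective_iff_injective_and_card _).mpr
      ⟨(MonoidHom.ker_eq_bot_iff _).mp hK, by rw [Nat.card_perm, h4, hG]; rfl⟩).2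
  exact ⟨_, (Subgroup.index_comap_of_surjective _ hsurj).trans alternatingGroup.index_eq_two⟩

theorem exists_index_eq_two_or_normal_card_eq_two (hG : Nat.card G = 24) :
    (∃ H : Subgroup G, H.index = 2) ∨ ∃ N : Subgroup G, N.Normal ∧ Nat.card N = 2 := by
  rcases card_sylow_three_eq_one_or_four hG with h1 | h4
  · exact .inl (exists_index_eq_two_of_card_sylow_three_eq_one hG h1)
  rcases card_ker_toPermHom_sylow_three_eq_one_or_two hG h4 with hK | hK
  · exact .inl (exists_index_eq_two_of_ker_toPermHom_eq_bot hG h4 (Subgroup.card_eq_one.mp hK))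
  · exact .inr ⟨_, MonoidHom.normal_ker _, hK⟩

end CardEq24

theorem hasListFactorization_of_card_eq_24 {G : Type u} [Group G] (hG : Nat.card G = 24)
    {l : List ℕ} (hl : ∀ x ∈ l, 1 < x) (hprod : l.prod = 24) : HasListFactorization G l := by
  have : Finite G := Nat.finite_of_card_ne_zero (by omega)
  obtain ⟨c, hc, d, rfl⟩ :=
    Nat.prime_three.prime.dvd_prod_iff.mp (show 3 ∣ l.prod by norm_num [hprod])
  obtain ⟨l₁, l₂, rfl⟩ := List.append_of_mem hc
  rw [List.prod_append, List.prod_cons] at hprod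
  have h8 : l₁.prod * d * l₂.prod = 2 ^ 3 := by linarith
  have h₁ : l₁.prod ∣ 2 ^ 3 := Dvd.intro (d * l₂.prod) (by rw [← h8, mul_assoc])
  have h₂ : l₂.prod ∣ 2 ^ 3 := Dvd.intro_left (l₁.prod * d) h8
  have hl₁ (x) (hx : x ∈ l₁) : 1 < x := hl x (List.mem_append_left _ hx)
  have hl₂ (x) (hx : x ∈ l₂) : 1 < x := hl x (List.mem_append_right _ (List.mem_cons_of_mem _ hx))
  have h24 := exists_index_eq_two_or_normal_card_eq_two hG
  rcases eq_one_or_two_of_mul_mul_eq_eight h8 with h | h | h | h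
  · rw [List.eq_nil_of_one_lt_of_prod_eq_one hl₁ h, List.nil_append]
    exact .cons_of_prod_dvd_prime_pow Nat.prime_two h₂ (by rw [hG, ← hprod, h, one_mul])
  · rw [List.eq_singleton_of_one_lt_of_prod_prime hl₁ (h ▸ Nat.prime_two), h,
      List.singleton_append]
    refine (HasListFactorization.cons_two_and_append_two h24 fun Q _ _ hQ => ?_).1
    rw [h] at hprod
    exact .cons_of_prod_dvd_prime_pow Nat.prime_two h₂ (by linarith)
  · rw [List.eq_nil_of_one_lt_of_prod_eq_one hl₂ h]
    exact .append_of_prod_dvd_prime_pow Nat.prime_two h₁ (by rw [hG, ← hprod, h, mul_one])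
  · rw [List.eq_singleton_of_one_lt_of_prod_prime hl₂ (h ▸ Nat.prime_two), h,
      ← List.singleton_append, ← List.append_assoc]
    refine (HasListFactorization.cons_two_and_append_two h24 fun Q _ _ hQ => ?_).2
    rw [h] at hprod
    exact .append_of_prod_dvd_prime_pow Nat.prime_two h₁ (by linarith)

/-- Every group of order `24` is multifold-factorizable. -/
theorem isMultifoldFactorizable_of_card_24 (G : Type*) [Group G]
    (hG : Nat.card G = 24) : IsMultifoldFactorizable G := by
  intro k _ a ha hprod
  refine (hasListFactorization_of_card_eq_24 hG ?_ ?_).hasFactorization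
  · simpa [List.mem_ofFn] using ha
  · rw [List.prod_ofFn, ← hprod, hG]
end

section
/- The symmetric group S_5 on five letters is multifold-factorizable. -/
/-!
Merging adjacent factors of a factorization keeps it a factorization, since `|A * B| ≤ |A| |B|`.
Hence it suffices to factor `S₅` along every ordering of the prime factors `2, 2, 2, 3, 5` of
`120`, and since inverting `S₅ = A₁ ⋯ Aₖ` gives `S₅ = Aₖ⁻¹ ⋯ A₁⁻¹`, along one ordering out of each
pair `l, l.reverse`. The ten orderings left are realized by explicit subsets, checked by
computation.
-/

open Pointwise

theorem List.prod_map_inv_reverse {α : Type*} [DivisionMonoid α] (L : List α) :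
    (L.map (·⁻¹)).reverse.prod = L.prod⁻¹ := by
  induction L with
  | nil => simp
  | cons x L ih => simp [List.prod_append, ih, mul_inv_rev]

section Factorization

variable {G : Type*} [Group G]

/-- Bounding the sizes only from above makes merging adjacent factors free; once `l.prod = |G|`
the bounds are attained (`HasFactorizationLE.hasFactorization`). -/
def HasFactorizationLE (G : Type*) [Group G] (l : List ℕ) : Prop :=
  ∃ L : List (Set G), L.Forall₂ (fun (s : Set G) n => Nat.card s ≤ n) l ∧ L.prod = Set.univ

theorem Set.natCard_list_prod_le (L : List (Set G)) :
    Nat.card L.prod ≤ (L.map fun s : Set G => Nat.card s).prod := by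
  induction L with
  | nil => simp
  | cons s L ih =>
    simpa only [List.prod_cons, List.map_cons] using
      Set.natCard_mul_le.trans (Nat.mul_le_mul_left _ ih)

theorem Set.natCard_list_prod_le_of_forall₂ {L : List (Set G)} {l : List ℕ}
    (h : L.Forall₂ (fun (s : Set G) n => Nat.card s ≤ n) l) : Nat.card L.prod ≤ l.prod :=
  (Set.natCard_list_prod_le L).trans (List.forall₂_map_left_iff.2 h).prod_le_prod'

theorem Set.exists_forall₂_map_prod_of_forall₂_flatten {L : List (Set G)} {LL : List (List ℕ)}
    (h : L.Forall₂ (fun (s : Set G) n => Nat.card s ≤ n) LL.flatten) :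
    ∃ L' : List (Set G),
      L'.Forall₂ (fun (s : Set G) n => Nat.card s ≤ n) (LL.map List.prod) ∧ L'.prod = L.prod := by
  induction LL generalizing L with
  | nil => cases h; exact ⟨[], .nil, rfl⟩
  | cons m LL ih =>
    rw [List.flatten_cons] at h
    obtain ⟨L', hL', hprod⟩ := ih (List.forall₂_drop_append L m LL.flatten h)
    refine ⟨(L.take m.length).prod :: L', .cons ?_ hL', ?_⟩
    · exact Set.natCard_list_prod_le_of_forall₂ (List.forall₂_take_append L m LL.flatten h)
    · rw [List.prod_cons, hprod, List.prod_take_mul_prod_drop]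

namespace HasFactorizationLE

theorem of_flatten {LL : List (List ℕ)} (h : HasFactorizationLE G LL.flatten) :
    HasFactorizationLE G (LL.map List.prod) := by
  obtain ⟨L, hL, hprod⟩ := h
  obtain ⟨L', hL', hprod'⟩ := Set.exists_forall₂_map_prod_of_forall₂_flatten hL
  exact ⟨L', hL', hprod'.trans hprod⟩

theorem reverse {l : List ℕ} (h : HasFactorizationLE G l) : HasFactorizationLE G l.reverse := by
  obtain ⟨L, hL, hprod⟩ := h
  refine ⟨(L.map (·⁻¹)).reverse, ?_, ?_⟩
  · rw [List.forall₂_reverse_iff, List.forall₂_map_left_iff]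
    simpa only [Set.natCard_inv] using hL
  · rw [List.prod_map_inv_reverse, hprod, Set.inv_univ]

theorem hasFactorization [Finite G] {k : ℕ} {a : Fin k → ℕ}
    (h : HasFactorizationLE G (List.ofFn a)) (hcard : Nat.card G = ∏ i, a i) :
    HasFactorization G a := by
  obtain ⟨L, hL, hprod⟩ := h
  obtain rfl : L.length = k := by simpa using hL.length_eq
  have hle : ∀ i : Fin L.length, Nat.card L[(i : ℕ)] ≤ a i := fun i => by
    simpa using hL.get i.2 (by simp)
  have hge : ∏ i, a i ≤ ∏ i : Fin L.length, Nat.card L[(i : ℕ)] := by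
    rw [← hcard, ← Nat.card_univ, ← hprod, ← List.prod_ofFn,
      List.ofFn_getElem_eq_map L fun s : Set G => Nat.card s]
    exact Set.natCard_list_prod_le L
  have hpos : ∀ i : Fin L.length, 0 < Nat.card L[(i : ℕ)] := fun i =>
    Nat.pos_of_ne_zero <| Finset.prod_ne_zero_iff.1
      ((hcard ▸ Nat.card_pos : 0 < ∏ i, a i).trans_le hge).ne' i (Finset.mem_univ i)
  refine ⟨fun i => L[(i : ℕ)], fun i => ?_, hcard, by rw [List.ofFn_getElem, hprod]⟩
  by_contra hne
  exact (Finset.prod_lt_prod (fun j _ => hpos j) (fun j _ => hle j)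
    ⟨i, Finset.mem_univ i, (hle i).lt_of_ne hne⟩).not_ge hge

end HasFactorizationLE

theorem isMultifoldFactorizable_of_forall_primes [Finite G]
    (h : ∀ l : List ℕ, (∀ p ∈ l, p.Prime) → l.prod = Nat.card G → HasFactorizationLE G l) :
    IsMultifoldFactorizable G := by
  intro k _ a ha hcard
  have hfac : ((List.ofFn a).map Nat.primeFactorsList).map List.prod = List.ofFn a := by
    simp [List.map_ofFn, Function.comp_def, Nat.prod_primeFactorsList (ha _).ne_bot]
  refine HasFactorizationLE.hasFactorization ?_ hcard
  rw [← hfac]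
  refine HasFactorizationLE.of_flatten (h _ ?_ ?_)
  · simp only [List.mem_flatten, List.mem_map]
    rintro p ⟨_, ⟨n, -, rfl⟩, hp⟩
    exact Nat.prime_of_mem_primeFactorsList hp
  · rw [List.prod_flatten, hfac, List.prod_ofFn, hcard]

theorem Set.list_prod_mem_list_prod_of_forall₂ {s : List G} {LL : List (List G)}
    (h : s.Forall₂ (· ∈ ·) LL) : s.prod ∈ (LL.map fun l => {g | g ∈ l}).prod := by
  induction h with
  | nil => exact Set.mem_one.2 rfl
  | cons hx _ ih => exact Set.mul_mem_mul hx ih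

theorem hasFactorizationLE_of_nodup_sections [Fintype G] (LL : List (List G))
    (hnodup : (LL.sections.map List.prod).Nodup) (hlen : LL.sections.length = Fintype.card G) :
    HasFactorizationLE G (LL.map List.length) := by
  classical
  refine ⟨LL.map fun l => {g | g ∈ l}, ?_, Set.eq_univ_of_forall fun g => ?_⟩
  · rw [List.forall₂_map_left_iff, List.forall₂_map_right_iff, List.forall₂_same]
    intro l _
    rw [← List.coe_toFinset, Nat.card_coe_set_eq, Set.ncard_coe_finset]
    exact List.toFinset_card_le l
  · have hall : (LL.sections.map List.prod).toFinset = Finset.univ :=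
      Finset.eq_univ_of_card _ (by rw [List.toFinset_card_of_nodup hnodup, List.length_map, hlen])
    obtain ⟨s, hs, rfl⟩ := List.mem_map.1 (List.mem_toFinset.1 (hall ▸ Finset.mem_univ g))
    exact Set.list_prod_mem_list_prod_of_forall₂ (List.mem_sections.1 hs)

end Factorization

section SymmetricGroupFive

open Equiv

/-- Found by computer search: one factorization of `S₅` for each ordering of `2, 2, 2, 3, 5` up to
reversal. -/
def permFinFiveFactorizations : List (List (List (Perm (Fin 5)))) :=
  [[[1, c[0, 1] * c[2, 3]],
    [1, c[0, 2] * c[1, 3]],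
    [1, c[0, 1]],
    [1, c[0, 1, 2], c[0, 2, 1]],
    [1, c[0, 1, 2, 3, 4], c[0, 2, 4, 1, 3], c[0, 3, 1, 4, 2], c[0, 4, 3, 2, 1]]],
   [[1, c[0, 3] * c[1, 4]],
    [1, c[0, 1]],
    [1, c[1, 4]],
    [1, c[2, 4], c[1, 2], c[1, 3, 2], c[0, 2, 1]],
    [1, c[3, 4], c[2, 3]]],
   [[1, c[0, 1] * c[2, 3]],
    [1, c[0, 2] * c[1, 3]],
    [1, c[0, 1, 2], c[0, 2, 1]],
    [1, c[0, 1]],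
    [1, c[0, 1, 2, 3, 4], c[0, 2, 4, 1, 3], c[0, 3, 1, 4, 2], c[0, 4, 3, 2, 1]]],
   [[1, c[1, 2] * c[3, 4]],
    [1, c[2, 3, 4]],
    [1, c[1, 2, 3], c[1, 3, 2]],
    [1, c[0, 1, 2, 3, 4], c[0, 2, 4, 1, 3], c[0, 3, 1, 4, 2], c[0, 4, 3, 2, 1]],
    [1, c[0, 1]]],
   [[1, c[0, 1]],
    [1, c[1, 4] * c[2, 3]],
    [1, c[0, 1, 2, 3, 4], c[0, 2, 4, 1, 3], c[0, 3, 1, 4, 2], c[0, 4, 3, 2, 1]],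
    [1, c[2, 3, 4]],
    [1, c[1, 2] * c[3, 4], c[0, 4, 2, 3, 1]]],
   [[1, c[0, 3] * c[2, 4]],
    [1, c[0, 2]],
    [1, c[1, 2], c[1, 3, 2], c[1, 4, 3, 2], c[0, 1]],
    [1, c[2, 3], c[2, 4, 3]],
    [1, c[3, 4]]],
   [[1, c[0, 1]],
    [1, c[0, 1, 2], c[0, 2, 1]],
    [1, c[0, 1] * c[2, 3]],
    [1, c[0, 2] * c[1, 3]],
    [1, c[0, 1, 2, 3, 4], c[0, 2, 4, 1, 3], c[0, 3, 1, 4, 2], c[0, 4, 3, 2, 1]]],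
   [[1, c[0, 1]],
    [1, c[1, 2] * c[3, 4], c[0, 1, 3, 2, 4]],
    [1, c[2, 4, 3]],
    [1, c[0, 4, 3, 2, 1], c[0, 3, 1, 4, 2], c[0, 2, 4, 1, 3], c[0, 1, 2, 3, 4]],
    [1, c[1, 4] * c[2, 3]]],
   [[1, c[0, 1]],
    [1, c[0, 4, 3, 2, 1], c[0, 3, 1, 4, 2], c[0, 2, 4, 1, 3], c[0, 1, 2, 3, 4]],
    [1, c[1, 3] * c[2, 4]],
    [1, c[1, 2] * c[3, 4]],
    [1, c[2, 4, 3], c[2, 3, 4]]],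
   [[1, c[0, 1, 2], c[0, 2, 1]],
    [1, c[0, 1]],
    [1, c[0, 1] * c[2, 3]],
    [1, c[0, 2] * c[1, 3]],
    [1, c[0, 1, 2, 3, 4], c[0, 2, 4, 1, 3], c[0, 3, 1, 4, 2], c[0, 4, 3, 2, 1]]]]

theorem permFinFiveFactorizations_covers_orderings :
    ∀ l ∈ ([2, 2, 2, 3, 5] : List ℕ).permutations',
      l ∈ permFinFiveFactorizations.map (·.map List.length) ∨
        l.reverse ∈ permFinFiveFactorizations.map (·.map List.length) := by
  decide +kernel

theorem length_sections_of_mem_permFinFiveFactorizations :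
    ∀ LL ∈ permFinFiveFactorizations, LL.sections.length = 120 := by
  decide +kernel

/- Comparing the codes `finFunctionFinEquiv σ : Fin 3125` is much cheaper for the kernel than
comparing permutations. -/
theorem nodup_map_finFunctionFinEquiv_sections_prod :
    ∀ LL ∈ permFinFiveFactorizations,
      ((LL.sections.map List.prod).map fun σ : Perm (Fin 5) => finFunctionFinEquiv ⇑σ).Nodup := by
  decide +kernel

theorem hasFactorizationLE_perm_fin_five {l : List ℕ} (hp : ∀ p ∈ l, p.Prime)
    (hprod : l.prod = 120) : HasFactorizationLE (Perm (Fin 5)) l := by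
  have hl : l.Perm [2, 2, 2, 3, 5] := (Nat.primeFactorsList_unique hprod hp).trans
    (Nat.primeFactorsList_unique (by norm_num) (by norm_num)).symm
  have hvalid : ∀ LL ∈ permFinFiveFactorizations,
      HasFactorizationLE (Perm (Fin 5)) (LL.map List.length) := fun LL hLL =>
    hasFactorizationLE_of_nodup_sections LL
      ((nodup_map_finFunctionFinEquiv_sections_prod LL hLL).of_map _)
      (by rw [length_sections_of_mem_permFinFiveFactorizations LL hLL]; rfl)
  rcases permFinFiveFactorizations_covers_orderings l (List.mem_permutations'.2 hl) with h | h
  · obtain ⟨LL, hLL, rfl⟩ := List.mem_map.1 h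
    exact hvalid LL hLL
  · obtain ⟨LL, hLL, hrev⟩ := List.mem_map.1 h
    simpa [hrev] using (hvalid LL hLL).reverse

end SymmetricGroupFive

/-- The symmetric group `S₅` on five letters is multifold-factorizable. -/
theorem isMultifoldFactorizable_symmetricGroupFive :
    IsMultifoldFactorizable (Equiv.Perm (Fin 5)) :=
  isMultifoldFactorizable_of_forall_primes fun _ hp hprod =>
    hasFactorizationLE_perm_fin_five hp <| hprod.trans <| by rw [Nat.card_perm, Nat.card_fin]; rfl
end
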